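/- arXiv:q-alg/9709015 — 3 statements merged into one kernel-verified Lean document; each statement's English description precedes it below -/
import Mathlib

section
/- Let n ≥ 2 and let I_n be the two-sided ideal of BB_n(R) generated by e_{n−1}. Then: (a) for every i with 1 ≤ i ≤ n−1, the two-sided ideal generated by e_i equals I_n; (b) if 2 is invertible in R and there exists s ∈ R with s² = 4q + q²q1², then the quotient algebra BB_n(R)/I_n is isomorphic as an R-algebra to the type-B Hecke algebra HB_n with parameters Q = q² and Q0 = (2 + q·q1² − q1·s)/2, via the map sending the class of X_i to q⁻¹·X_i for 1 ≤ i ≤ n−1 and the class of Y to −q⁻¹(q·q1 + s)/2 · X_0. -/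
namespace BMWB

inductive Gen (n : ℕ) : Type
  | X : Fin (n - 1) → Gen n
  | Xinv : Fin (n - 1) → Gen n
  | Y : 0 < n → Gen n
  | Yinv : 0 < n → Gen n

variable (R : Type) [CommRing R]

def fX {n : ℕ} (i : Fin (n - 1)) : FreeAlgebra R (Gen n) := FreeAlgebra.ι R (Gen.X i)
def fXinv {n : ℕ} (i : Fin (n - 1)) : FreeAlgebra R (Gen n) := FreeAlgebra.ι R (Gen.Xinv i)
def fY {n : ℕ} (h : 0 < n) : FreeAlgebra R (Gen n) := FreeAlgebra.ι R (Gen.Y h)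
def fYinv {n : ℕ} (h : 0 < n) : FreeAlgebra R (Gen n) := FreeAlgebra.ι R (Gen.Yinv h)
def fe {n : ℕ} (deli : R) (i : Fin (n - 1)) : FreeAlgebra R (Gen n) :=
  1 - deli • (fX R i - fXinv R i)

variable (lam lami deli q0 q1 A : R) (n : ℕ)

/-- The defining relations of the reduced Birman-Murakami-Wenzl algebra of Coxeter type B. -/
inductive Rel : FreeAlgebra R (Gen n) → FreeAlgebra R (Gen n) → Prop
  | XXinv (i : Fin (n - 1)) : Rel (fX R i * fXinv R i) 1
  | XinvX (i : Fin (n - 1)) : Rel (fXinv R i * fX R i) 1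
  | YYinv (h : 0 < n) : Rel (fY R h * fYinv R h) 1
  | YinvY (h : 0 < n) : Rel (fYinv R h * fY R h) 1
  | comm (i j : Fin (n - 1)) (h : (j : ℕ) + 1 < (i : ℕ)) :
      Rel (fX R i * fX R j) (fX R j * fX R i)
  | braid (i j : Fin (n - 1)) (h : (i : ℕ) + 1 = (j : ℕ)) :
      Rel (fX R i * fX R j * fX R i) (fX R j * fX R i * fX R j)
  | Xe (i : Fin (n - 1)) : Rel (fX R i * fe R deli i) (lam • fe R deli i)
  | eX (i : Fin (n - 1)) : Rel (fe R deli i * fX R i) (lam • fe R deli i)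
  | eXe (i j : Fin (n - 1)) (h : (j : ℕ) + 1 = (i : ℕ)) :
      Rel (fe R deli i * fX R j * fe R deli i) (lami • fe R deli i)
  | eXinve (i j : Fin (n - 1)) (h : (j : ℕ) + 1 = (i : ℕ)) :
      Rel (fe R deli i * fXinv R j * fe R deli i) (lam • fe R deli i)
  | bYXYX (h : 0 < n) (i : Fin (n - 1)) (hi : (i : ℕ) = 0) :
      Rel (fX R i * fY R h * fX R i * fY R h) (fY R h * fX R i * fY R h * fX R i)
  | Ysq (h : 0 < n) : Rel (fY R h * fY R h) (q1 • fY R h + q0 • (1 : FreeAlgebra R (Gen n)))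
  | YXYe (h : 0 < n) (i : Fin (n - 1)) (hi : (i : ℕ) = 0) :
      Rel (fY R h * fX R i * fY R h * fe R deli i) (fe R deli i)
  | Ycomm (h : 0 < n) (i : Fin (n - 1)) (hi : 0 < (i : ℕ)) :
      Rel (fY R h * fX R i) (fX R i * fY R h)
  | eYe (h : 0 < n) (i : Fin (n - 1)) (hi : (i : ℕ) = 0) :
      Rel (fe R deli i * fY R h * fe R deli i) (A • fe R deli i)

/-- The reduced Birman-Murakami-Wenzl algebra of Coxeter type B, `BB_n(R)`,
presented by generators and relations. -/
abbrev BB : Type := RingQuot (Rel R lam lami deli q0 q1 A n)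

noncomputable def mk : FreeAlgebra R (Gen n) →ₐ[R] BB R lam lami deli q0 q1 A n :=
  RingQuot.mkAlgHom R (Rel R lam lami deli q0 q1 A n)

/-- The generator `Y` (junk value `1` if `n = 0`). -/
noncomputable def YY : BB R lam lami deli q0 q1 A n :=
  if h : 0 < n then mk R lam lami deli q0 q1 A n (fY R h) else 1

/-- The inverse of the generator `Y`. -/
noncomputable def YYi : BB R lam lami deli q0 q1 A n :=
  if h : 0 < n then mk R lam lami deli q0 q1 A n (fYinv R h) else 1

/-- The generator `X_i`, `1 ≤ i ≤ n-1` (junk value `1` out of range). -/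
noncomputable def XX (i : ℕ) : BB R lam lami deli q0 q1 A n :=
  if h : i - 1 < n - 1 then mk R lam lami deli q0 q1 A n (fX R ⟨i - 1, h⟩) else 1

/-- The inverse `X_i⁻¹`. -/
noncomputable def XXi (i : ℕ) : BB R lam lami deli q0 q1 A n :=
  if h : i - 1 < n - 1 then mk R lam lami deli q0 q1 A n (fXinv R ⟨i - 1, h⟩) else 1

/-- The element `e_i := 1 - δ⁻¹ (X_i - X_i⁻¹)`. -/
noncomputable def ee (i : ℕ) : BB R lam lami deli q0 q1 A n :=
  1 - deli • (XX R lam lami deli q0 q1 A n i - XXi R lam lami deli q0 q1 A n i)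

/-- `Y_i := X_{i-1} ⋯ X_1 Y X_1⁻¹ ⋯ X_{i-1}⁻¹`. -/
noncomputable def Yn : ℕ → BB R lam lami deli q0 q1 A n
  | 0 => 1
  | 1 => YY R lam lami deli q0 q1 A n
  | (k + 2) => XX R lam lami deli q0 q1 A n (k + 1) * Yn (k + 1) * XXi R lam lami deli q0 q1 A n (k + 1)

/-- `Y'_i := X_{i-1} ⋯ X_1 Y X_1 ⋯ X_{i-1}`. -/
noncomputable def Yp : ℕ → BB R lam lami deli q0 q1 A n
  | 0 => 1
  | 1 => YY R lam lami deli q0 q1 A n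
  | (k + 2) => XX R lam lami deli q0 q1 A n (k + 1) * Yp (k + 1) * XX R lam lami deli q0 q1 A n (k + 1)

/-- The inverse of `Y'_i`. -/
noncomputable def Ypi : ℕ → BB R lam lami deli q0 q1 A n
  | 0 => 1
  | 1 => YYi R lam lami deli q0 q1 A n
  | (k + 2) => XXi R lam lami deli q0 q1 A n (k + 1) * Ypi (k + 1) * XXi R lam lami deli q0 q1 A n (k + 1)

/-- The set of the images of the generators (and their inverses) of `BB_{m+1}` inside `BB_n`.
Its `Algebra.adjoin` is the image of the canonical algebra homomorphism `BB_{m+1} → BB_n`. -/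
noncomputable def genSet (m : ℕ) : Set (BB R lam lami deli q0 q1 A n) :=
  {a | a = YY R lam lami deli q0 q1 A n ∨ a = YYi R lam lami deli q0 q1 A n ∨
    ∃ i, 1 ≤ i ∧ i ≤ m ∧ (a = XX R lam lami deli q0 q1 A n i ∨ a = XXi R lam lami deli q0 q1 A n i)}

/-- The image of the canonical algebra homomorphism `BB_{m+1}(R) → BB_n(R)`, realized as the
subalgebra generated by the images of the generators `Y, Y⁻¹, X_1, …, X_m` (and inverses). -/
noncomputable def sub (m : ℕ) : Subalgebra R (BB R lam lami deli q0 q1 A n) :=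
  Algebra.adjoin R (genSet R lam lami deli q0 q1 A n m)

/-- `X(i,j) = X_i X_{i+1} ⋯ X_j`. -/
noncomputable def Xprod (i j : ℕ) : BB R lam lami deli q0 q1 A n :=
  ((List.range (j + 1 - i)).map (fun k => XX R lam lami deli q0 q1 A n (i + k))).prod

/-- `E(i,j) = e_i e_{i+2} ⋯ e_j`. -/
noncomputable def Eprod (i j : ℕ) : BB R lam lami deli q0 q1 A n :=
  ((List.range ((j - i) / 2 + 1)).map (fun k => ee R lam lami deli q0 q1 A n (i + 2 * k))).prod

/-- `H_1 = e_1`, `H_{m+1} = e_{m+1} X(m+2, 2m+1) X(m+1, 2m) H_m`. -/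
noncomputable def H : ℕ → BB R lam lami deli q0 q1 A n
  | 0 => 1
  | 1 => ee R lam lami deli q0 q1 A n 1
  | (k + 2) => ee R lam lami deli q0 q1 A n (k + 2) *
      Xprod R lam lami deli q0 q1 A n (k + 3) (2 * k + 3) *
      Xprod R lam lami deli q0 q1 A n (k + 2) (2 * k + 2) * H (k + 1)

end BMWB

namespace Hecke

inductive HGen (n : ℕ) : Type
  | X : Fin n → HGen n

variable (R : Type) [CommRing R]

def hfX {n : ℕ} (i : Fin n) : FreeAlgebra R (HGen n) := FreeAlgebra.ι R (HGen.X i)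

variable (Q Q0 : R) (n : ℕ)

/-- The defining relations of the type-B Hecke algebra `HB_n`. -/
inductive HRel : FreeAlgebra R (HGen n) → FreeAlgebra R (HGen n) → Prop
  | b0 (i j : Fin n) (hi : (i : ℕ) = 0) (hj : (j : ℕ) = 1) :
      HRel (hfX R i * hfX R j * hfX R i * hfX R j) (hfX R j * hfX R i * hfX R j * hfX R i)
  | comm (i j : Fin n) (h : (j : ℕ) + 1 < (i : ℕ)) :
      HRel (hfX R i * hfX R j) (hfX R j * hfX R i)
  | braid (i j : Fin n) (h1 : 0 < (i : ℕ)) (h2 : (i : ℕ) + 1 = (j : ℕ)) :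
      HRel (hfX R i * hfX R j * hfX R i) (hfX R j * hfX R i * hfX R j)
  | quad (i : Fin n) (h : 0 < (i : ℕ)) :
      HRel (hfX R i * hfX R i) ((Q - 1) • hfX R i + Q • (1 : FreeAlgebra R (HGen n)))
  | quad0 (i : Fin n) (h : (i : ℕ) = 0) :
      HRel (hfX R i * hfX R i) ((Q0 - 1) • hfX R i + Q0 • (1 : FreeAlgebra R (HGen n)))

/-- The type-B Hecke algebra `HB_n(R)` with parameters `Q`, `Q0`. -/
abbrev HB : Type := RingQuot (HRel R Q Q0 n)

noncomputable def hmk : FreeAlgebra R (HGen n) →ₐ[R] HB R Q Q0 n :=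
  RingQuot.mkAlgHom R (HRel R Q Q0 n)

/-- The Hecke generator `X_i`, `0 ≤ i ≤ n-1`. -/
noncomputable def hX (i : ℕ) : HB R Q Q0 n :=
  if h : i < n then hmk R Q Q0 n (hfX R ⟨i, h⟩) else 1

end Hecke

namespace Hecke
variable {R : Type} [CommRing R] {Q Q0 : R} {n : ℕ}

lemma hX_eq (i : ℕ) (h : i < n) : hX R Q Q0 n i = hmk R Q Q0 n (hfX R ⟨i, h⟩) := dif_pos h

lemma hquad {i : ℕ} (h1 : 0 < i) (h2 : i < n) :
    hX R Q Q0 n i * hX R Q Q0 n i = (Q - 1) • hX R Q Q0 n i + Q • 1 := by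
  rw [hX_eq i h2, ← map_mul]
  have := RingQuot.mkAlgHom_rel R (HRel.quad (R := R) (Q := Q) (Q0 := Q0) (n := n) ⟨i, h2⟩ h1)
  simp only [hmk, map_mul, map_add, map_smul, map_one] at this ⊢
  rw [this]

lemma hquad0 (h2 : 0 < n) :
    hX R Q Q0 n 0 * hX R Q Q0 n 0 = (Q0 - 1) • hX R Q Q0 n 0 + Q0 • 1 := by
  rw [hX_eq 0 h2, ← map_mul]
  have := RingQuot.mkAlgHom_rel R (HRel.quad0 (R := R) (Q := Q) (Q0 := Q0) (n := n) ⟨0, h2⟩ rfl)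
  simp only [hmk, map_mul, map_add, map_smul, map_one] at this ⊢
  rw [this]

lemma hcomm {i j : ℕ} (h : j + 1 < i) (hi : i < n) :
    hX R Q Q0 n i * hX R Q Q0 n j = hX R Q Q0 n j * hX R Q Q0 n i := by
  rw [hX_eq i hi, hX_eq j (by omega), ← map_mul, ← map_mul]
  exact RingQuot.mkAlgHom_rel R (HRel.comm ⟨i, hi⟩ ⟨j, by omega⟩ h)

lemma hbraid {i : ℕ} (h1 : 0 < i) (h2 : i + 1 < n) :
    hX R Q Q0 n i * hX R Q Q0 n (i+1) * hX R Q Q0 n i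
      = hX R Q Q0 n (i+1) * hX R Q Q0 n i * hX R Q Q0 n (i+1) := by
  rw [hX_eq i (by omega), hX_eq (i+1) h2]
  simp only [← map_mul]
  exact RingQuot.mkAlgHom_rel R (HRel.braid ⟨i, by omega⟩ ⟨i+1, h2⟩ h1 rfl)

lemma hb0 (h : 1 < n) :
    hX R Q Q0 n 0 * hX R Q Q0 n 1 * hX R Q Q0 n 0 * hX R Q Q0 n 1
      = hX R Q Q0 n 1 * hX R Q Q0 n 0 * hX R Q Q0 n 1 * hX R Q Q0 n 0 := by
  rw [hX_eq 0 (by omega), hX_eq 1 h]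
  simp only [← map_mul]
  exact RingQuot.mkAlgHom_rel R (HRel.b0 ⟨0, by omega⟩ ⟨1, h⟩ rfl rfl)

end Hecke

namespace BMWB
variable {R : Type} [CommRing R] {lam lami deli q0 q1 A : R} {n : ℕ}

lemma XX_eq (i : ℕ) (h : i - 1 < n - 1) :
    XX R lam lami deli q0 q1 A n i = mk R lam lami deli q0 q1 A n (fX R ⟨i-1, h⟩) := dif_pos h

lemma XXi_eq (i : ℕ) (h : i - 1 < n - 1) :
    XXi R lam lami deli q0 q1 A n i = mk R lam lami deli q0 q1 A n (fXinv R ⟨i-1, h⟩) := dif_pos h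

lemma YY_eq (h : 0 < n) :
    YY R lam lami deli q0 q1 A n = mk R lam lami deli q0 q1 A n (fY R h) := dif_pos h

lemma YYi_eq (h : 0 < n) :
    YYi R lam lami deli q0 q1 A n = mk R lam lami deli q0 q1 A n (fYinv R h) := dif_pos h

lemma ee_eq (i : ℕ) (h : i - 1 < n - 1) :
    ee R lam lami deli q0 q1 A n i = mk R lam lami deli q0 q1 A n (fe R deli ⟨i-1, h⟩) := by
  rw [ee, fe, XX_eq i h, XXi_eq i h, map_sub, map_smul, map_sub, map_one]

lemma bXXi (i : ℕ) (h : i - 1 < n - 1) :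
    XX R lam lami deli q0 q1 A n i * XXi R lam lami deli q0 q1 A n i = 1 := by
  rw [XX_eq i h, XXi_eq i h, ← map_mul]
  exact (RingQuot.mkAlgHom_rel R (Rel.XXinv (R := R) (lam := lam) (lami := lami) (deli := deli)
    (q0 := q0) (q1 := q1) (A := A) (n := n) ⟨i-1, h⟩)).trans (map_one _)

lemma bXiX (i : ℕ) (h : i - 1 < n - 1) :
    XXi R lam lami deli q0 q1 A n i * XX R lam lami deli q0 q1 A n i = 1 := by
  rw [XX_eq i h, XXi_eq i h, ← map_mul]
  exact (RingQuot.mkAlgHom_rel R (Rel.XinvX (R := R) (lam := lam) (lami := lami) (deli := deli)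
    (q0 := q0) (q1 := q1) (A := A) (n := n) ⟨i-1, h⟩)).trans (map_one _)

lemma bYYi (h : 0 < n) :
    YY R lam lami deli q0 q1 A n * YYi R lam lami deli q0 q1 A n = 1 := by
  rw [YY_eq h, YYi_eq h, ← map_mul]
  exact (RingQuot.mkAlgHom_rel R (Rel.YYinv (R := R) (lam := lam) (lami := lami) (deli := deli)
    (q0 := q0) (q1 := q1) (A := A) (n := n) h)).trans (map_one _)

lemma bYiY (h : 0 < n) :
    YYi R lam lami deli q0 q1 A n * YY R lam lami deli q0 q1 A n = 1 := by
  rw [YY_eq h, YYi_eq h, ← map_mul]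
  exact (RingQuot.mkAlgHom_rel R (Rel.YinvY (R := R) (lam := lam) (lami := lami) (deli := deli)
    (q0 := q0) (q1 := q1) (A := A) (n := n) h)).trans (map_one _)

lemma bYsq (h : 0 < n) :
    YY R lam lami deli q0 q1 A n * YY R lam lami deli q0 q1 A n
      = q1 • YY R lam lami deli q0 q1 A n + q0 • 1 := by
  rw [YY_eq h, ← map_mul]
  have := RingQuot.mkAlgHom_rel R (Rel.Ysq (R := R) (lam := lam) (lami := lami) (deli := deli)
    (q0 := q0) (q1 := q1) (A := A) (n := n) h)
  simp only [mk]
  rw [this, map_add, map_smul, map_smul, map_one]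

lemma bbraid (i : ℕ) (h1 : 1 ≤ i) (h2 : i + 1 ≤ n - 1) :
    XX R lam lami deli q0 q1 A n i * XX R lam lami deli q0 q1 A n (i+1)
        * XX R lam lami deli q0 q1 A n i
      = XX R lam lami deli q0 q1 A n (i+1) * XX R lam lami deli q0 q1 A n i
        * XX R lam lami deli q0 q1 A n (i+1) := by
  rw [XX_eq i (by omega), XX_eq (i+1) (by omega)]
  simp only [← map_mul]
  exact RingQuot.mkAlgHom_rel R (Rel.braid ⟨i-1, by omega⟩ ⟨i+1-1, by omega⟩ (by simp; omega))

lemma bcomm (i j : ℕ) (hj : 1 ≤ j) (h : j + 1 < i) (hi : i ≤ n - 1) :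
    XX R lam lami deli q0 q1 A n i * XX R lam lami deli q0 q1 A n j
      = XX R lam lami deli q0 q1 A n j * XX R lam lami deli q0 q1 A n i := by
  rw [XX_eq i (by omega), XX_eq j (by omega)]
  simp only [← map_mul]
  exact RingQuot.mkAlgHom_rel R (Rel.comm ⟨i-1, by omega⟩ ⟨j-1, by omega⟩ (by simp; omega))

lemma bYcomm (i : ℕ) (h2 : 2 ≤ i) (hi : i ≤ n - 1) :
    YY R lam lami deli q0 q1 A n * XX R lam lami deli q0 q1 A n i
      = XX R lam lami deli q0 q1 A n i * YY R lam lami deli q0 q1 A n := by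
  rw [YY_eq (by omega), XX_eq i (by omega)]
  simp only [← map_mul]
  exact RingQuot.mkAlgHom_rel R (Rel.Ycomm (by omega) ⟨i-1, by omega⟩ (by simp; omega))

lemma bYXYX (hn : 2 ≤ n) :
    XX R lam lami deli q0 q1 A n 1 * YY R lam lami deli q0 q1 A n
        * XX R lam lami deli q0 q1 A n 1 * YY R lam lami deli q0 q1 A n
      = YY R lam lami deli q0 q1 A n * XX R lam lami deli q0 q1 A n 1
        * YY R lam lami deli q0 q1 A n * XX R lam lami deli q0 q1 A n 1 := by
  rw [YY_eq (by omega), XX_eq 1 (by omega)]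
  simp only [← map_mul]
  exact RingQuot.mkAlgHom_rel R (Rel.bYXYX (by omega) ⟨0, by omega⟩ rfl)

end BMWB

namespace BMWB
variable {R : Type} [CommRing R] {lam lami deli q0 q1 A : R} {n : ℕ}

lemma conj_core {M : Type} [Ring M] [Algebra R M] (a ai b bi : M) (d : R)
    (h3 : ai * a = 1) (h4 : b * bi = 1) (hbr : a * b * a = b * a * b) :
    b * a * (1 - d • (b - bi)) = (1 - d • (a - ai)) * (b * a) := by
  have key : ai * (b * a) = b * a * bi := by
    calc ai * (b * a) = ai * (b * a) * (b * bi) := by rw [h4, mul_one]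
      _ = ai * (b * a * b) * bi := by simp only [mul_assoc]
      _ = ai * (a * b * a) * bi := by rw [← hbr]
      _ = ai * a * (b * a * bi) := by simp only [mul_assoc]
      _ = b * a * bi := by rw [h3, one_mul]
  have h5 : b * a * b = a * (b * a) := by rw [← hbr]; simp only [mul_assoc]
  rw [mul_sub, mul_one, mul_smul_comm, mul_sub, sub_mul, one_mul, smul_mul_assoc, sub_mul,
    h5, ← key]

lemma conj (i : ℕ) (h1 : 1 ≤ i) (h2 : i + 1 ≤ n - 1) :
    XX R lam lami deli q0 q1 A n (i+1) * XX R lam lami deli q0 q1 A n i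
        * ee R lam lami deli q0 q1 A n (i+1)
      = ee R lam lami deli q0 q1 A n i
        * (XX R lam lami deli q0 q1 A n (i+1) * XX R lam lami deli q0 q1 A n i) := by
  rw [ee, ee]
  exact conj_core _ _ _ _ _ (bXiX i (by omega)) (bXXi (i+1) (by omega))
    (bbraid i h1 h2)

lemma span_singleton_le {M : Type} [Ring M] {a : M} {I : TwoSidedIdeal M}
    (h : a ∈ I) : TwoSidedIdeal.span {a} ≤ I := by
  intro x hx
  exact TwoSidedIdeal.mem_span_iff.mp hx I (by simpa using h)

lemma span_succ (i : ℕ) (h1 : 1 ≤ i) (h2 : i + 1 ≤ n - 1) :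
    TwoSidedIdeal.span {ee R lam lami deli q0 q1 A n i}
      = TwoSidedIdeal.span {ee R lam lami deli q0 q1 A n (i+1)} := by
  set a := XX R lam lami deli q0 q1 A n i with ha
  set b := XX R lam lami deli q0 q1 A n (i+1) with hb
  set ai := XXi R lam lami deli q0 q1 A n i with hai
  set bi := XXi R lam lami deli q0 q1 A n (i+1) with hbi
  set e := ee R lam lami deli q0 q1 A n i with he
  set e1 := ee R lam lami deli q0 q1 A n (i+1) with he1
  have hc : b * a * e1 = e * (b * a) := conj i h1 h2
  have hXai : ai * a = 1 := bXiX i (by omega)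
  have hXa : a * ai = 1 := bXXi i (by omega)
  have hXbi : bi * b = 1 := bXiX (i+1) (by omega)
  have hXb : b * bi = 1 := bXXi (i+1) (by omega)
  have m1 : e1 = ai * (bi * (e * (b * a))) := by
    rw [← hc, show b * a * e1 = b * (a * e1) from mul_assoc _ _ _,
      ← mul_assoc bi b (a * e1), hXbi, one_mul, ← mul_assoc ai a e1, hXai, one_mul]
  have m2 : e = b * (a * e1) * (ai * bi) := by
    rw [show b * (a * e1) = b * a * e1 from (mul_assoc _ _ _).symm, hc,
      mul_assoc e (b * a) (ai * bi), show b * a * (ai * bi) = b * (a * ai) * bi by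
        simp only [mul_assoc], hXa, mul_one, hXb, mul_one]
  apply le_antisymm
  · apply span_singleton_le
    rw [m2]
    exact TwoSidedIdeal.mul_mem_right _ _ _ (TwoSidedIdeal.mul_mem_left _ _ _
      (TwoSidedIdeal.mul_mem_left _ _ _ (TwoSidedIdeal.subset_span rfl)))
  · apply span_singleton_le
    rw [m1]
    exact TwoSidedIdeal.mul_mem_left _ _ _ (TwoSidedIdeal.mul_mem_left _ _ _
      (TwoSidedIdeal.mul_mem_right _ _ _ (TwoSidedIdeal.subset_span rfl)))

lemma spans_eq (hn : 2 ≤ n) (i : ℕ) (h1 : 1 ≤ i) (hi : i ≤ n - 1) :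
    TwoSidedIdeal.span {ee R lam lami deli q0 q1 A n i}
      = TwoSidedIdeal.span {ee R lam lami deli q0 q1 A n (n-1)} := by
  suffices h : ∀ j, i ≤ j → j ≤ n - 1 →
      TwoSidedIdeal.span {ee R lam lami deli q0 q1 A n i}
        = TwoSidedIdeal.span {ee R lam lami deli q0 q1 A n j} by
    exact h (n-1) hi le_rfl
  intro j hij
  induction j, hij using Nat.le_induction with
  | base => intro _; rfl
  | succ k hk ih =>
    intro hk1
    rw [ih (by omega), span_succ k (by omega) (by omega)]

end BMWB
section Scalars
variable {R : Type} [CommRing R] {q qi q0 q0i q1 u s : R}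

lemma sc_all (hq : q * qi = 1) (hq0 : q0 = qi)
    (hu : 2 * u = 1) (hs : s * s = 4 * q + q * q * q1 * q1) :
    (-(qi * (q * q1 + s) * u)) * (-(qi * (q * q1 + s) * u)) * ((2 + q * q1 * q1 - q1 * s) * u) = q0 ∧
    ((2 + q * q1 * q1 - q1 * s) * u - 1) * (-(qi * (q * q1 + s) * u)) = q1 ∧
    (q * ((2 + q * q1 * q1 - q1 * s) * u) * (-(qi * (q * q1 + s) * u))) * (-(qi * (q * q1 + s) * u)) = 1 ∧
    (q * ((2 + q * q1 * q1 - q1 * s) * u) * (-(qi * (q * q1 + s) * u))) * q1 = (2 + q * q1 * q1 - q1 * s) * u - 1 ∧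
    (q * ((2 + q * q1 * q1 - q1 * s) * u) * (-(qi * (q * q1 + s) * u)))
      * (q * ((2 + q * q1 * q1 - q1 * s) * u) * (-(qi * (q * q1 + s) * u))) * q0
      = (2 + q * q1 * q1 - q1 * s) * u := by
  set Q0 : R := (2 + q * q1 * q1 - q1 * s) * u with hQ0
  set c : R := -(qi * (q * q1 + s) * u) with hc
  have h1 : (q*q1+s)*(q*q1+s)*(2+q*q1*q1-q1*s) = 8*q := by
    linear_combination (2 - q1*(q*q1 + s)) * hs
  have hS2 : c * c * Q0 = q0 := by
    rw [hc, hQ0, hq0]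
    linear_combination (qi*qi*u*u*u) * h1 + (8*u*u*u*qi)*hq + qi*(4*u*u+2*u+1)*hu
  have h4 : (q*q1-s)*(q*q1+s) = -(4*q) := by linear_combination -hs
  have hS1' : (Q0 - 1) * c = q1 := by
    rw [hc, hQ0]
    linear_combination (-(qi*u*u*q1))*h4 + 4*u*u*q1*hq + (q1*(2*u+1) - qi*u*(q*q1+s))*hu
  have hciS : (q*Q0*c)*c = 1 := by
    rw [hq0] at hS2
    linear_combination q * hS2 + hq
  have hciq1 : (q*Q0*c)*q1 = Q0 - 1 := by
    linear_combination (-(q*Q0*c))*hS1' + (Q0-1)*hciS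
  have hci2q0 : (q*Q0*c)*(q*Q0*c)*q0 = Q0 := by
    linear_combination (-(q*Q0*c)*(q*Q0*c))*hS2 + Q0*((q*Q0*c)*c + 1)*hciS
  exact ⟨hS2, hS1', hciS, hciq1, hci2q0⟩

end Scalars

namespace BMWB
open Hecke

variable (R : Type) [CommRing R]

/-- target parameters -/
noncomputable def fgen (q qi q0i q1 u s : R) (n : ℕ) :
    Gen n → HB R (q*q) ((2 + q*q1*q1 - q1*s)*u) n := fun g =>
  match g with
  | Gen.X j => qi • hX R (q*q) ((2 + q*q1*q1 - q1*s)*u) n ((j:ℕ)+1)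
  | Gen.Xinv j => qi • hX R (q*q) ((2 + q*q1*q1 - q1*s)*u) n ((j:ℕ)+1) - (q - qi) • 1
  | Gen.Y _ => (-(qi * (q * q1 + s) * u)) • hX R (q*q) ((2 + q*q1*q1 - q1*s)*u) n 0
  | Gen.Yinv _ => (q0i * (-(qi * (q * q1 + s) * u))) • hX R (q*q) ((2 + q*q1*q1 - q1*s)*u) n 0
      - (q0i * q1) • 1

noncomputable def fFree (q qi q0i q1 u s : R) (n : ℕ) :
    FreeAlgebra R (Gen n) →ₐ[R] HB R (q*q) ((2 + q*q1*q1 - q1*s)*u) n :=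
  FreeAlgebra.lift R (fgen R q qi q0i q1 u s n)

variable {q qi q0i q1 u s : R} {n : ℕ}

lemma fFree_fX (j : Fin (n-1)) : fFree R q qi q0i q1 u s n (fX R j)
    = qi • hX R (q*q) ((2 + q*q1*q1 - q1*s)*u) n ((j:ℕ)+1) := by
  rw [fFree, fX, FreeAlgebra.lift_ι_apply]; rfl

lemma fFree_fXinv (j : Fin (n-1)) : fFree R q qi q0i q1 u s n (fXinv R j)
    = qi • hX R (q*q) ((2 + q*q1*q1 - q1*s)*u) n ((j:ℕ)+1) - (q - qi) • 1 := by
  rw [fFree, fXinv, FreeAlgebra.lift_ι_apply]; rfl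

lemma fFree_fY (h : 0 < n) : fFree R q qi q0i q1 u s n (fY R h)
    = (-(qi * (q * q1 + s) * u)) • hX R (q*q) ((2 + q*q1*q1 - q1*s)*u) n 0 := by
  rw [fFree, fY, FreeAlgebra.lift_ι_apply]; rfl

lemma fFree_fYinv (h : 0 < n) : fFree R q qi q0i q1 u s n (fYinv R h)
    = (q0i * (-(qi * (q * q1 + s) * u))) • hX R (q*q) ((2 + q*q1*q1 - q1*s)*u) n 0
      - (q0i * q1) • 1 := by
  rw [fFree, fYinv, FreeAlgebra.lift_ι_apply]; rfl

lemma fFree_fe {deli : R} (hdd : deli * (q - qi) = 1) (j : Fin (n-1)) :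
    fFree R q qi q0i q1 u s n (fe R deli j) = 0 := by
  rw [fe, map_sub, map_smul, map_sub, map_one, fFree_fX, fFree_fXinv,
    sub_sub_cancel, smul_smul, hdd, one_smul, sub_self]

lemma mul_helper1 {M : Type} [Ring M] [Algebra R M] (al be ga t r : R) (X : M)
    (hX : X * X = t • X + r • 1) :
    (al • X) * (be • X - ga • 1) = (al*be*t - al*ga) • X + (al*be*r) • 1 := by
  rw [mul_sub, smul_mul_smul_comm, hX, smul_mul_smul_comm, mul_one]
  match_scalars <;> ring

lemma mul_helper2 {M : Type} [Ring M] [Algebra R M] (al be ga t r : R) (X : M)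
    (hX : X * X = t • X + r • 1) :
    (be • X - ga • 1) * (al • X) = (al*be*t - al*ga) • X + (al*be*r) • 1 := by
  rw [sub_mul, smul_mul_smul_comm, hX, smul_mul_smul_comm, one_mul]
  match_scalars <;> ring

theorem fRel {lam lami deli q0 A : R}
    (hq : q * qi = 1) (hdd : deli * (q - qi) = 1) (hq0 : q0 = qi) (hq0u : q0 * q0i = 1)
    (hu : 2 * u = 1) (hs : s * s = 4 * q + q * q * q1 * q1) :
    ∀ {a b}, Rel R lam lami deli q0 q1 A n a b →
      fFree R q qi q0i q1 u s n a = fFree R q qi q0i q1 u s n b := by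
  obtain ⟨hS2, hS1', hciS, hciq1, hci2q0⟩ :=
    sc_all (q := q) (qi := qi) (q0 := q0) (q1 := q1) (u := u) (s := s) hq hq0 hu hs
  intro a b h
  cases h with
  | XXinv i =>
    have hi := i.isLt
    rw [map_mul, map_one, fFree_fX, fFree_fXinv,
      mul_helper1 R _ _ _ _ _ _ (hquad (by omega) (by omega))]
    match_scalars
    · linear_combination (q*qi)*hq
    · linear_combination (q*qi+1)*hq
  | XinvX i =>
    have hi := i.isLt
    rw [map_mul, map_one, fFree_fX, fFree_fXinv,
      mul_helper2 R _ _ _ _ _ _ (hquad (by omega) (by omega))]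
    match_scalars
    · linear_combination (q*qi)*hq
    · linear_combination (q*qi+1)*hq
  | YYinv h =>
    rw [map_mul, map_one, fFree_fY, fFree_fYinv,
      mul_helper1 R _ _ _ _ _ _ (hquad0 h)]
    match_scalars
    · linear_combination q0i*(-(qi * (q * q1 + s) * u))*hS1'
    · linear_combination q0i*hS2 + hq0u
  | YinvY h =>
    rw [map_mul, map_one, fFree_fY, fFree_fYinv,
      mul_helper2 R _ _ _ _ _ _ (hquad0 h)]
    match_scalars
    · linear_combination q0i*(-(qi * (q * q1 + s) * u))*hS1'
    · linear_combination q0i*hS2 + hq0u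
  | comm i j hij =>
    have hi := i.isLt
    rw [map_mul, map_mul, fFree_fX, fFree_fX, smul_mul_smul_comm, smul_mul_smul_comm,
      hcomm (show (j:ℕ)+1+1 < (i:ℕ)+1 by omega) (by omega)]
  | braid i j hij =>
    have hj := j.isLt
    rw [map_mul, map_mul, map_mul, map_mul, fFree_fX, fFree_fX]
    rw [← hij]
    simp only [smul_mul_smul_comm]
    rw [hbraid (show 0 < (i:ℕ)+1 by omega) (by omega)]
  | Xe i =>
    rw [map_mul, map_smul, fFree_fe R hdd, mul_zero, smul_zero]
  | eX i =>
    rw [map_mul, map_smul, fFree_fe R hdd, zero_mul, smul_zero]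
  | eXe i j hij =>
    rw [map_mul, map_mul, map_smul, fFree_fe R hdd, zero_mul, zero_mul, smul_zero]
  | eXinve i j hij =>
    rw [map_mul, map_mul, map_smul, fFree_fe R hdd, zero_mul, zero_mul, smul_zero]
  | bYXYX h i hi =>
    simp only [map_mul, fFree_fX, fFree_fY, hi]
    simp only [smul_mul_smul_comm]
    rw [hb0 (by omega)]
    match_scalars
    ring
  | Ysq h =>
    rw [map_mul, map_add, map_smul, map_smul, map_one, fFree_fY, smul_mul_smul_comm,
      hquad0 h]
    match_scalars
    · linear_combination (-(qi * (q * q1 + s) * u))*hS1'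
    · linear_combination hS2
  | YXYe h i hi =>
    simp only [map_mul]
    rw [fFree_fe R hdd, mul_zero]
  | Ycomm h i hi =>
    have hilt := i.isLt
    rw [map_mul, map_mul, fFree_fX, fFree_fY, smul_mul_smul_comm, smul_mul_smul_comm,
      ← hcomm (show 0+1 < (i:ℕ)+1 by omega) (by omega)]
    match_scalars
    ring
  | eYe h i hi =>
    rw [map_mul, map_mul, map_smul, fFree_fe R hdd, zero_mul, zero_mul, smul_zero]

end BMWB

namespace BMWB
open Hecke

variable (R : Type) [CommRing R] (lam lami deli q0 q1 A : R) (n : ℕ)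

/-- The quotient algebra `BB_n(R)/I_n`. -/
abbrev QB : Type := RingQuot (fun a b : BB R lam lami deli q0 q1 A n =>
  a - b ∈ TwoSidedIdeal.span {ee R lam lami deli q0 q1 A n (n-1)})

noncomputable def rho : BB R lam lami deli q0 q1 A n →ₐ[R] QB R lam lami deli q0 q1 A n :=
  RingQuot.mkAlgHom R _

noncomputable def ggen (q qi u s : R) : HGen n → QB R lam lami deli q0 q1 A n := fun g =>
  match g with
  | HGen.X i => if (i : ℕ) = 0 then
      (q * ((2 + q*q1*q1 - q1*s)*u) * (-(qi * (q * q1 + s) * u))) •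
        rho R lam lami deli q0 q1 A n (YY R lam lami deli q0 q1 A n)
    else q • rho R lam lami deli q0 q1 A n (XX R lam lami deli q0 q1 A n (i : ℕ))

noncomputable def gFree (q qi u s : R) :
    FreeAlgebra R (HGen n) →ₐ[R] QB R lam lami deli q0 q1 A n :=
  FreeAlgebra.lift R (ggen R lam lami deli q0 q1 A n q qi u s)

variable {R lam lami deli q0 q1 A n}
variable {q qi q0i u s : R}

lemma gFree_hfX (i : Fin n) :
    gFree R lam lami deli q0 q1 A n q qi u s (hfX R i)
      = if (i : ℕ) = 0 then
          (q * ((2 + q*q1*q1 - q1*s)*u) * (-(qi * (q * q1 + s) * u))) •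
            rho R lam lami deli q0 q1 A n (YY R lam lami deli q0 q1 A n)
        else q • rho R lam lami deli q0 q1 A n (XX R lam lami deli q0 q1 A n (i : ℕ)) := by
  rw [gFree, hfX, FreeAlgebra.lift_ι_apply]; rfl

/-- image of `ee` vanishes in the quotient. -/
lemma qee (hn : 2 ≤ n) (i : ℕ) (h1 : 1 ≤ i) (h2 : i ≤ n - 1) :
    rho R lam lami deli q0 q1 A n (ee R lam lami deli q0 q1 A n i) = 0 := by
  have hrel : ee R lam lami deli q0 q1 A n i - 0
      ∈ TwoSidedIdeal.span {ee R lam lami deli q0 q1 A n (n-1)} := by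
    rw [sub_zero, ← spans_eq hn i h1 h2]
    exact TwoSidedIdeal.subset_span rfl
  have h0 := RingQuot.mkAlgHom_rel R (s := fun a b : BB R lam lami deli q0 q1 A n =>
    a - b ∈ TwoSidedIdeal.span {ee R lam lami deli q0 q1 A n (n-1)}) hrel
  rw [rho, h0, map_zero]

lemma qsub (hn : 2 ≤ n) (hdd : deli * (q - qi) = 1) (i : ℕ) (h1 : 1 ≤ i) (h2 : i ≤ n - 1) :
    rho R lam lami deli q0 q1 A n (XX R lam lami deli q0 q1 A n i)
      - rho R lam lami deli q0 q1 A n (XXi R lam lami deli q0 q1 A n i) = (q - qi) • 1 := by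
  have h := qee (lam := lam) (lami := lami) (deli := deli) (q0 := q0) (q1 := q1) (A := A) hn i h1 h2
  simp only [ee, map_sub, map_one, map_smul] at h
  rw [sub_eq_zero] at h
  calc rho R lam lami deli q0 q1 A n (XX R lam lami deli q0 q1 A n i)
      - rho R lam lami deli q0 q1 A n (XXi R lam lami deli q0 q1 A n i)
      = ((q - qi) * deli) • (rho R lam lami deli q0 q1 A n (XX R lam lami deli q0 q1 A n i)
        - rho R lam lami deli q0 q1 A n (XXi R lam lami deli q0 q1 A n i)) := by
        rw [show (q - qi) * deli = 1 by linear_combination hdd, one_smul]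
    _ = (q - qi) • (deli • (rho R lam lami deli q0 q1 A n (XX R lam lami deli q0 q1 A n i)
        - rho R lam lami deli q0 q1 A n (XXi R lam lami deli q0 q1 A n i))) := by
        rw [smul_smul]
    _ = (q - qi) • 1 := by rw [← h]

lemma qXXi (i : ℕ) (h : i - 1 < n - 1) :
    rho R lam lami deli q0 q1 A n (XX R lam lami deli q0 q1 A n i)
      * rho R lam lami deli q0 q1 A n (XXi R lam lami deli q0 q1 A n i) = 1 := by
  rw [← map_mul, bXXi i h, map_one]

lemma qquad (hn : 2 ≤ n) (hdd : deli * (q - qi) = 1) (i : ℕ) (h1 : 1 ≤ i) (h2 : i ≤ n - 1) :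
    rho R lam lami deli q0 q1 A n (XX R lam lami deli q0 q1 A n i)
      * rho R lam lami deli q0 q1 A n (XX R lam lami deli q0 q1 A n i)
      = (q - qi) • rho R lam lami deli q0 q1 A n (XX R lam lami deli q0 q1 A n i) + 1 := by
  have hs' := qsub (lam := lam) (lami := lami) (deli := deli) (q0 := q0) (q1 := q1) (A := A) (q := q) (qi := qi) hn hdd i h1 h2
  have hxi : rho R lam lami deli q0 q1 A n (XXi R lam lami deli q0 q1 A n i) + (q - qi) • 1
      = rho R lam lami deli q0 q1 A n (XX R lam lami deli q0 q1 A n i) := by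
    rw [← hs']; abel
  have h4 := qXXi (lam := lam) (lami := lami) (deli := deli) (q0 := q0) (q1 := q1) (A := A) (n := n) (i := i) (by omega)
  calc rho R lam lami deli q0 q1 A n (XX R lam lami deli q0 q1 A n i)
      * rho R lam lami deli q0 q1 A n (XX R lam lami deli q0 q1 A n i)
      = rho R lam lami deli q0 q1 A n (XX R lam lami deli q0 q1 A n i)
        * (rho R lam lami deli q0 q1 A n (XXi R lam lami deli q0 q1 A n i) + (q - qi) • 1) := by
        rw [hxi]
    _ = rho R lam lami deli q0 q1 A n (XX R lam lami deli q0 q1 A n i)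
        * rho R lam lami deli q0 q1 A n (XXi R lam lami deli q0 q1 A n i)
        + (q - qi) • (rho R lam lami deli q0 q1 A n (XX R lam lami deli q0 q1 A n i)) := by
        rw [mul_add, mul_smul_comm, mul_one]
    _ = 1 + (q - qi) • (rho R lam lami deli q0 q1 A n (XX R lam lami deli q0 q1 A n i)) := by
        rw [h4]
    _ = (q - qi) • rho R lam lami deli q0 q1 A n (XX R lam lami deli q0 q1 A n i) + 1 := by
        abel


lemma qYsq (h : 0 < n) :
    rho R lam lami deli q0 q1 A n (YY R lam lami deli q0 q1 A n)
      * rho R lam lami deli q0 q1 A n (YY R lam lami deli q0 q1 A n)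
      = q1 • rho R lam lami deli q0 q1 A n (YY R lam lami deli q0 q1 A n) + q0 • 1 := by
  have h0 := congrArg (rho R lam lami deli q0 q1 A n) (bYsq h)
  simpa only [map_mul, map_add, map_smul, map_one] using h0

lemma qYYi (h : 0 < n) :
    rho R lam lami deli q0 q1 A n (YY R lam lami deli q0 q1 A n)
      * rho R lam lami deli q0 q1 A n (YYi R lam lami deli q0 q1 A n) = 1 := by
  have h0 := congrArg (rho R lam lami deli q0 q1 A n) (bYYi h)
  simpa only [map_mul, map_one] using h0

lemma qYiY (h : 0 < n) :
    rho R lam lami deli q0 q1 A n (YYi R lam lami deli q0 q1 A n)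
      * rho R lam lami deli q0 q1 A n (YY R lam lami deli q0 q1 A n) = 1 := by
  have h0 := congrArg (rho R lam lami deli q0 q1 A n) (bYiY h)
  simpa only [map_mul, map_one] using h0

lemma qb (hn : 2 ≤ n) :
    rho R lam lami deli q0 q1 A n (XX R lam lami deli q0 q1 A n 1)
      * rho R lam lami deli q0 q1 A n (YY R lam lami deli q0 q1 A n)
      * rho R lam lami deli q0 q1 A n (XX R lam lami deli q0 q1 A n 1)
      * rho R lam lami deli q0 q1 A n (YY R lam lami deli q0 q1 A n)
      = rho R lam lami deli q0 q1 A n (YY R lam lami deli q0 q1 A n)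
      * rho R lam lami deli q0 q1 A n (XX R lam lami deli q0 q1 A n 1)
      * rho R lam lami deli q0 q1 A n (YY R lam lami deli q0 q1 A n)
      * rho R lam lami deli q0 q1 A n (XX R lam lami deli q0 q1 A n 1) := by
  have h0 := congrArg (rho R lam lami deli q0 q1 A n) (bYXYX hn)
  simpa only [map_mul] using h0

lemma qbraid (i : ℕ) (h1 : 1 ≤ i) (h2 : i + 1 ≤ n - 1) :
    rho R lam lami deli q0 q1 A n (XX R lam lami deli q0 q1 A n i)
      * rho R lam lami deli q0 q1 A n (XX R lam lami deli q0 q1 A n (i+1))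
      * rho R lam lami deli q0 q1 A n (XX R lam lami deli q0 q1 A n i)
      = rho R lam lami deli q0 q1 A n (XX R lam lami deli q0 q1 A n (i+1))
      * rho R lam lami deli q0 q1 A n (XX R lam lami deli q0 q1 A n i)
      * rho R lam lami deli q0 q1 A n (XX R lam lami deli q0 q1 A n (i+1)) := by
  have h0 := congrArg (rho R lam lami deli q0 q1 A n) (bbraid i h1 h2)
  simpa only [map_mul] using h0

lemma qcomm (i j : ℕ) (hj : 1 ≤ j) (h : j + 1 < i) (hi : i ≤ n - 1) :
    rho R lam lami deli q0 q1 A n (XX R lam lami deli q0 q1 A n i)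
      * rho R lam lami deli q0 q1 A n (XX R lam lami deli q0 q1 A n j)
      = rho R lam lami deli q0 q1 A n (XX R lam lami deli q0 q1 A n j)
      * rho R lam lami deli q0 q1 A n (XX R lam lami deli q0 q1 A n i) := by
  have h0 := congrArg (rho R lam lami deli q0 q1 A n) (bcomm i j hj h hi)
  simpa only [map_mul] using h0

lemma qYcomm (i : ℕ) (h2 : 2 ≤ i) (hi : i ≤ n - 1) :
    rho R lam lami deli q0 q1 A n (YY R lam lami deli q0 q1 A n)
      * rho R lam lami deli q0 q1 A n (XX R lam lami deli q0 q1 A n i)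
      = rho R lam lami deli q0 q1 A n (XX R lam lami deli q0 q1 A n i)
      * rho R lam lami deli q0 q1 A n (YY R lam lami deli q0 q1 A n) := by
  have h0 := congrArg (rho R lam lami deli q0 q1 A n) (bYcomm i h2 hi)
  simpa only [map_mul] using h0

theorem gRel (hn : 2 ≤ n) (hq : q * qi = 1) (hdd : deli * (q - qi) = 1) (hq0 : q0 = qi)
    (hu : 2 * u = 1) (hs : s * s = 4 * q + q * q * q1 * q1) :
    ∀ {a b}, HRel R (q*q) ((2 + q*q1*q1 - q1*s)*u) n a b →
      gFree R lam lami deli q0 q1 A n q qi u s a = gFree R lam lami deli q0 q1 A n q qi u s b := by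
  obtain ⟨hS2, hS1', hciS, hciq1, hci2q0⟩ :=
    sc_all (q := q) (qi := qi) (q0 := q0) (q1 := q1) (u := u) (s := s) hq hq0 hu hs
  intro a b h
  cases h with
  | b0 i j hi hj =>
    simp only [map_mul, gFree_hfX, hi, hj, reduceIte, one_ne_zero]
    simp only [smul_mul_smul_comm]
    rw [← qb hn]
    match_scalars
    ring
  | comm i j hij =>
    have hilt := i.isLt
    by_cases hj0 : (j : ℕ) = 0
    · simp only [map_mul, gFree_hfX, hj0, reduceIte, if_neg (show ¬ (i:ℕ) = 0 by omega)]
      simp only [smul_mul_smul_comm]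
      rw [← qYcomm (i := (i:ℕ)) (by omega) (by omega)]
      match_scalars
      ring
    · simp only [map_mul, gFree_hfX, if_neg hj0, if_neg (show ¬ (i:ℕ) = 0 by omega)]
      simp only [smul_mul_smul_comm]
      rw [qcomm (i := (i:ℕ)) (j := (j:ℕ)) (by omega) (by omega) (by omega)]
  | braid i j h1 h2 =>
    have hjlt := j.isLt
    simp only [map_mul, gFree_hfX, if_neg (show ¬ (i:ℕ) = 0 by omega),
      if_neg (show ¬ (j:ℕ) = 0 by omega)]
    rw [← h2]
    simp only [smul_mul_smul_comm]
    rw [qbraid (i := (i:ℕ)) (by omega) (by omega)]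
  | quad i h =>
    have hilt := i.isLt
    simp only [map_mul, map_add, map_smul, map_one, gFree_hfX,
      if_neg (show ¬ (i:ℕ) = 0 by omega)]
    rw [smul_mul_smul_comm, qquad hn hdd (i : ℕ) (by omega) (by omega)]
    match_scalars
    · linear_combination (-q)*hq
    · ring
  | quad0 i h =>
    simp only [map_mul, map_add, map_smul, map_one, gFree_hfX, h, reduceIte]
    rw [smul_mul_smul_comm, qYsq (by omega)]
    match_scalars
    · linear_combination (q * ((2 + q*q1*q1 - q1*s)*u) * (-(qi * (q * q1 + s) * u))) * hciq1
    · linear_combination hci2q0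


lemma gFree_hfX' (i : ℕ) (h : i < n) :
    gFree R lam lami deli q0 q1 A n q qi u s (hfX R ⟨i, h⟩)
      = if i = 0 then
          (q * ((2 + q*q1*q1 - q1*s)*u) * (-(qi * (q * q1 + s) * u))) •
            rho R lam lami deli q0 q1 A n (YY R lam lami deli q0 q1 A n)
        else q • rho R lam lami deli q0 q1 A n (XX R lam lami deli q0 q1 A n i) := by
  rw [gFree_hfX]

end BMWB

open BMWB Hecke in
/-- Lemma 12: every `e_i` generates the same two-sided ideal `I_n` of `BB_n(R)`, and the
quotient `BB_n(R)/I_n` is isomorphic to the type-B Hecke algebra `HB_n` with `Q = q²`,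
`Q0 = (2 + q q1² − q1 √(4q + q² q1²))/2`, via `X_i ↦ q⁻¹ X_i`, `Y ↦ −q⁻¹(q q1 + √(4q+q²q1²))/2 · X_0`. -/
theorem BB_quotient_Hecke (R : Type) [CommRing R] [IsDomain R]
    (q qi lam lami del deli q0 q0i q1 A x : R)
    (hq : q * qi = 1) (hlam : lam * lami = 1) (hdel : del * deli = 1) (hq0u : q0 * q0i = 1)
    (hdelta : del = q - qi) (hx : x * del = del - lam + lami)
    (hA : A * (1 - q0 * lam) = q1 * x) (hq0 : q0 = qi) (n : ℕ) (hn : 2 ≤ n)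
    (u s : R) (hu : 2 * u = 1) (hs : s * s = 4 * q + q * q * q1 * q1) :
    (∀ i, 1 ≤ i → i ≤ n - 1 →
      TwoSidedIdeal.span {ee R lam lami deli q0 q1 A n i} = TwoSidedIdeal.span {ee R lam lami deli q0 q1 A n (n - 1)}) ∧
    (∃ φ : RingQuot (fun a b : BB R lam lami deli q0 q1 A n => a - b ∈ TwoSidedIdeal.span {ee R lam lami deli q0 q1 A n (n - 1)}) ≃ₐ[R]
        HB R (q * q) ((2 + q * q1 * q1 - q1 * s) * u) n,
      (∀ i, 1 ≤ i → i ≤ n - 1 →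
        φ (RingQuot.mkAlgHom R (fun a b : BB R lam lami deli q0 q1 A n => a - b ∈ TwoSidedIdeal.span {ee R lam lami deli q0 q1 A n (n - 1)})
            (XX R lam lami deli q0 q1 A n i)) =
          qi • hX R (q * q) ((2 + q * q1 * q1 - q1 * s) * u) n i) ∧
      φ (RingQuot.mkAlgHom R (fun a b : BB R lam lami deli q0 q1 A n => a - b ∈ TwoSidedIdeal.span {ee R lam lami deli q0 q1 A n (n - 1)})
          (YY R lam lami deli q0 q1 A n)) =
        (-(qi * (q * q1 + s) * u)) • hX R (q * q) ((2 + q * q1 * q1 - q1 * s) * u) n 0) := by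
  have hdd : deli * (q - qi) = 1 := by rw [← hdelta]; linear_combination hdel
  obtain ⟨hS2, hS1', hciS, hciq1, hci2q0⟩ :=
    sc_all (q := q) (qi := qi) (q0 := q0) (q1 := q1) (u := u) (s := s) hq hq0 hu hs
  have hcci : (-(qi * (q * q1 + s) * u)) * (q * ((2 + q*q1*q1 - q1*s)*u) * (-(qi * (q * q1 + s) * u))) = 1 := by
    linear_combination hciS
  refine ⟨fun i h1 h2 => spans_eq hn i h1 h2, ?_⟩
  -- the forward map
  let F : BB R lam lami deli q0 q1 A n →ₐ[R] HB R (q*q) ((2 + q*q1*q1 - q1*s)*u) n :=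
    RingQuot.liftAlgHom R ⟨fFree R q qi q0i q1 u s n,
      fun _ _ h => fRel R (lam := lam) (lami := lami) (A := A) hq hdd hq0 hq0u hu hs h⟩
  have hF_mk : ∀ y, F (mk R lam lami deli q0 q1 A n y) = fFree R q qi q0i q1 u s n y := by
    intro y; rw [mk]; exact RingQuot.liftAlgHom_mkAlgHom_apply _ _ _ _
  have hFrel : ∀ ⦃a b : BB R lam lami deli q0 q1 A n⦄,
      a - b ∈ TwoSidedIdeal.span {ee R lam lami deli q0 q1 A n (n-1)} → F a = F b := by
    intro a b hab
    have hker : F (a - b) = 0 := by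
      refine (TwoSidedIdeal.mem_ker F).1 (TwoSidedIdeal.mem_span_iff.mp hab (TwoSidedIdeal.ker F) ?_)
      intro y hy
      rw [Set.mem_singleton_iff] at hy
      subst hy
      rw [SetLike.mem_coe, TwoSidedIdeal.mem_ker]
      rw [ee_eq (n-1) (by omega), hF_mk, fFree_fe R hdd]
    exact sub_eq_zero.mp ((map_sub F a b).symm.trans hker)
  let f := RingQuot.liftAlgHom (S := R) (B := HB R (q*q) ((2 + q*q1*q1 - q1*s)*u) n)
    (s := fun a b : BB R lam lami deli q0 q1 A n =>
      a - b ∈ TwoSidedIdeal.span {ee R lam lami deli q0 q1 A n (n-1)}) ⟨F, hFrel⟩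
  have hf_rho : ∀ y, f (rho R lam lami deli q0 q1 A n y) = F y := by
    intro y; rw [rho]; exact RingQuot.liftAlgHom_mkAlgHom_apply _ _ _ _
  -- the backward map
  let g : HB R (q*q) ((2 + q*q1*q1 - q1*s)*u) n →ₐ[R] QB R lam lami deli q0 q1 A n :=
    RingQuot.liftAlgHom R ⟨gFree R lam lami deli q0 q1 A n q qi u s,
      fun _ _ h => gRel hn hq hdd hq0 hu hs h⟩
  have hg_hmk : ∀ y, g (hmk R (q*q) ((2 + q*q1*q1 - q1*s)*u) n y)
      = gFree R lam lami deli q0 q1 A n q qi u s y := by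
    intro y; rw [hmk]; exact RingQuot.liftAlgHom_mkAlgHom_apply _ _ _ _
  -- identifications of generators
  have hmk_hfX : ∀ i : Fin n, hmk R (q*q) ((2 + q*q1*q1 - q1*s)*u) n (hfX R i)
      = hX R (q*q) ((2 + q*q1*q1 - q1*s)*u) n (i : ℕ) := by
    intro i
    rw [hX_eq (i : ℕ) i.isLt]
  have hmk_fX : ∀ j : Fin (n-1), mk R lam lami deli q0 q1 A n (fX R j)
      = XX R lam lami deli q0 q1 A n ((j:ℕ)+1) := by
    intro j
    rw [XX_eq ((j:ℕ)+1) (by simpa using j.isLt)]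
    rfl
  have hmk_fXinv : ∀ j : Fin (n-1), mk R lam lami deli q0 q1 A n (fXinv R j)
      = XXi R lam lami deli q0 q1 A n ((j:ℕ)+1) := by
    intro j
    rw [XXi_eq ((j:ℕ)+1) (by simpa using j.isLt)]
    rfl
  -- values of g on the Hecke generators
  have hgX0 : g (hX R (q*q) ((2 + q*q1*q1 - q1*s)*u) n 0)
      = (q * ((2 + q*q1*q1 - q1*s)*u) * (-(qi * (q * q1 + s) * u))) •
          rho R lam lami deli q0 q1 A n (YY R lam lami deli q0 q1 A n) := by
    rw [hX_eq 0 (by omega), hg_hmk, gFree_hfX', if_pos rfl]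
  have hgXi : ∀ i : ℕ, 1 ≤ i → i < n → g (hX R (q*q) ((2 + q*q1*q1 - q1*s)*u) n i)
      = q • rho R lam lami deli q0 q1 A n (XX R lam lami deli q0 q1 A n i) := by
    intro i h1 h2
    rw [hX_eq i h2, hg_hmk, gFree_hfX', if_neg (by omega)]
  -- values of f on the BB generators
  have hfXX : ∀ i : ℕ, 1 ≤ i → i ≤ n - 1 →
      f (rho R lam lami deli q0 q1 A n (XX R lam lami deli q0 q1 A n i))
        = qi • hX R (q*q) ((2 + q*q1*q1 - q1*s)*u) n i := by
    intro i h1 h2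
    rw [hf_rho, XX_eq i (by omega), hF_mk, fFree_fX, show i - 1 + 1 = i by omega]
  have hfYY : f (rho R lam lami deli q0 q1 A n (YY R lam lami deli q0 q1 A n))
      = (-(qi * (q * q1 + s) * u)) • hX R (q*q) ((2 + q*q1*q1 - q1*s)*u) n 0 := by
    rw [hf_rho, YY_eq (by omega), hF_mk, fFree_fY]
  -- f ∘ g = id
  have hfg : f.comp g = AlgHom.id R (HB R (q*q) ((2 + q*q1*q1 - q1*s)*u) n) := by
    apply RingQuot.ringQuot_ext'
    apply FreeAlgebra.hom_ext
    funext gx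
    obtain ⟨i⟩ := gx
    simp only [Function.comp_apply, AlgHom.coe_comp, AlgHom.coe_id, id_eq]
    have hgi : (RingQuot.mkAlgHom R (HRel R (q*q) ((2 + q*q1*q1 - q1*s)*u) n))
        (FreeAlgebra.ι R (HGen.X i)) = hmk R (q*q) ((2 + q*q1*q1 - q1*s)*u) n (hfX R i) := rfl
    rw [hgi, hmk_hfX]
    by_cases hi0 : (i : ℕ) = 0
    · rw [hi0, hgX0, map_smul, hfYY, smul_smul, hciS, one_smul]
    · have := i.isLt
      rw [hgXi (i : ℕ) (by omega) (by omega), map_smul, hfXX (i : ℕ) (by omega) (by omega),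
        smul_smul, hq, one_smul]
  -- g ∘ f = id
  have hgf : g.comp f = AlgHom.id R (QB R lam lami deli q0 q1 A n) := by
    apply RingQuot.ringQuot_ext'
    apply RingQuot.ringQuot_ext'
    apply FreeAlgebra.hom_ext
    funext gx
    simp only [Function.comp_apply, AlgHom.coe_comp, AlgHom.coe_id, id_eq]
    have hrho' : ∀ y : BB R lam lami deli q0 q1 A n,
        (RingQuot.mkAlgHom R (fun a b : BB R lam lami deli q0 q1 A n =>
          a - b ∈ TwoSidedIdeal.span {ee R lam lami deli q0 q1 A n (n-1)})) y
          = rho R lam lami deli q0 q1 A n y := fun y => rfl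
    have hmk' : ∀ y : FreeAlgebra R (Gen n),
        (RingQuot.mkAlgHom R (Rel R lam lami deli q0 q1 A n)) y = mk R lam lami deli q0 q1 A n y :=
      fun y => rfl
    cases gx with
    | X j =>
      have hjlt : (j:ℕ) + 1 < n := by have := j.isLt; omega
      rw [hmk', hrho', show FreeAlgebra.ι R (Gen.X j) = fX R j from rfl, hmk_fX,
        hfXX ((j:ℕ)+1) (by omega) (by omega), map_smul, hgXi ((j:ℕ)+1) (by omega) hjlt,
        smul_smul, show qi * q = 1 by linear_combination hq, one_smul]
    | Xinv j =>
      have hjlt : (j:ℕ) + 1 < n := by have := j.isLt; omega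
      rw [hmk', hrho', show FreeAlgebra.ι R (Gen.Xinv j) = fXinv R j from rfl, hmk_fXinv]
      have hfXXi : f (rho R lam lami deli q0 q1 A n (XXi R lam lami deli q0 q1 A n ((j:ℕ)+1)))
          = qi • hX R (q*q) ((2 + q*q1*q1 - q1*s)*u) n ((j:ℕ)+1) - (q - qi) • 1 := by
        rw [hf_rho, XXi_eq ((j:ℕ)+1) (by omega), hF_mk, fFree_fXinv,
          show (j:ℕ)+1-1+1 = (j:ℕ)+1 by omega]
      rw [hfXXi, map_sub, map_smul, map_smul, map_one, hgXi ((j:ℕ)+1) (by omega) hjlt,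
        smul_smul, show qi * q = 1 by linear_combination hq, one_smul]
      have hsub := qsub (lam := lam) (lami := lami) (deli := deli) (q0 := q0) (q1 := q1)
        (A := A) (q := q) (qi := qi) hn hdd ((j:ℕ)+1) (by omega) (by omega)
      rw [← hsub]
      abel
    | Y h =>
      rw [hmk', hrho', show FreeAlgebra.ι R (Gen.Y h) = fY R h from rfl,
        show mk R lam lami deli q0 q1 A n (fY R h) = YY R lam lami deli q0 q1 A n from
          (YY_eq h).symm,
        hfYY, map_smul, hgX0, smul_smul, hcci, one_smul]
    | Yinv h =>
      rw [hmk', hrho', show FreeAlgebra.ι R (Gen.Yinv h) = fYinv R h from rfl,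
        show mk R lam lami deli q0 q1 A n (fYinv R h) = YYi R lam lami deli q0 q1 A n from
          (YYi_eq h).symm]
      have hfYYi : f (rho R lam lami deli q0 q1 A n (YYi R lam lami deli q0 q1 A n))
          = (q0i * (-(qi * (q * q1 + s) * u))) • hX R (q*q) ((2 + q*q1*q1 - q1*s)*u) n 0
            - (q0i * q1) • 1 := by
        rw [hf_rho, YYi_eq h, hF_mk, fFree_fYinv]
      rw [hfYYi, map_sub, map_smul, map_smul, map_one, hgX0, smul_smul,
        show (q0i * (-(qi * (q * q1 + s) * u)))
          * (q * ((2 + q*q1*q1 - q1*s)*u) * (-(qi * (q * q1 + s) * u))) = q0i from by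
          linear_combination q0i * hcci]
      have hYq : rho R lam lami deli q0 q1 A n (YY R lam lami deli q0 q1 A n)
          * (q0i • rho R lam lami deli q0 q1 A n (YY R lam lami deli q0 q1 A n)
            + (-(q0i*q1)) • 1) = 1 := by
        rw [mul_add, mul_smul_comm, mul_smul_comm, mul_one, qYsq (by omega)]
        match_scalars
        · ring
        · linear_combination hq0u
      have hYi : rho R lam lami deli q0 q1 A n (YYi R lam lami deli q0 q1 A n)
          = q0i • rho R lam lami deli q0 q1 A n (YY R lam lami deli q0 q1 A n)
            + (-(q0i*q1)) • 1 := by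
        calc rho R lam lami deli q0 q1 A n (YYi R lam lami deli q0 q1 A n)
            = rho R lam lami deli q0 q1 A n (YYi R lam lami deli q0 q1 A n)
              * (rho R lam lami deli q0 q1 A n (YY R lam lami deli q0 q1 A n)
                * (q0i • rho R lam lami deli q0 q1 A n (YY R lam lami deli q0 q1 A n)
                  + (-(q0i*q1)) • 1)) := by rw [hYq, mul_one]
          _ = (rho R lam lami deli q0 q1 A n (YYi R lam lami deli q0 q1 A n)
              * rho R lam lami deli q0 q1 A n (YY R lam lami deli q0 q1 A n))
              * (q0i • rho R lam lami deli q0 q1 A n (YY R lam lami deli q0 q1 A n)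
                  + (-(q0i*q1)) • 1) := by rw [mul_assoc]
          _ = q0i • rho R lam lami deli q0 q1 A n (YY R lam lami deli q0 q1 A n)
              + (-(q0i*q1)) • 1 := by rw [qYiY (by omega), one_mul]
      rw [hYi]
      module
  refine ⟨AlgEquiv.ofAlgHom f g hfg hgf, ?_, ?_⟩
  · intro i h1 h2
    show f ((RingQuot.mkAlgHom R (fun a b : BB R lam lami deli q0 q1 A n =>
      a - b ∈ TwoSidedIdeal.span {ee R lam lami deli q0 q1 A n (n - 1)}))
        (XX R lam lami deli q0 q1 A n i)) = _
    exact hfXX i h1 h2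
  · show f ((RingQuot.mkAlgHom R (fun a b : BB R lam lami deli q0 q1 A n =>
      a - b ∈ TwoSidedIdeal.span {ee R lam lami deli q0 q1 A n (n - 1)}))
        (YY R lam lami deli q0 q1 A n)) = _
    exact hfYY
end

section
/- For every n ≥ 1, the reduced type-B Birman–Murakami–Wenzl algebra BB_n(R) admits an involutive R-algebra anti-automorphism fixing each generator X_1, …, X_{n−1} and Y; equivalently, there is an R-algebra isomorphism from BB_n(R) to its opposite algebra BB_n(R)^{op} sending each generator to itself, whose square is the identity. -/
/-!
The anti-automorphism is induced by word reversal `star` on the free algebra, which fixes every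
generator and hence every `e_i`. Reversal maps each defining relation to a relation of `BB_n`:
most are palindromic or are exchanged in pairs (`X e = λ e` and `e X = λ e`,
`X X⁻¹ = 1` and `X⁻¹ X = 1`). The only new one is `e₁ Y X₁ Y = e₁`; it holds because `Y X₁ Y`
commutes with `X₁` by the type-B braid relation, hence with `e₁`, so that
`e₁ Y X₁ Y = Y X₁ Y e₁ = e₁`. Involutivity is inherited from `star (star a) = a`.
-/

namespace BMWB

variable (R : Type) [CommRing R]

variable (lam lami deli q0 q1 A : R) (n : ℕ)

theorem _root_.FreeAlgebra.star_smul {S X : Type*} [CommSemiring S] (r : S) (a : FreeAlgebra S X) :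
    star (r • a) = r • star a :=
  congrArg MulOpposite.unop (map_smul (FreeAlgebra.starHom (R := S) (X := X)) r a)

@[simp] theorem star_fX (i : Fin (n - 1)) : star (fX R i) = fX R i := FreeAlgebra.star_ι _
@[simp] theorem star_fXinv (i : Fin (n - 1)) : star (fXinv R i) = fXinv R i := FreeAlgebra.star_ι _
@[simp] theorem star_fY (h : 0 < n) : star (fY R h) = fY R h := FreeAlgebra.star_ι _
@[simp] theorem star_fYinv (h : 0 < n) : star (fYinv R h) = fYinv R h := FreeAlgebra.star_ι _
@[simp] theorem star_fe (i : Fin (n - 1)) : star (fe R deli i) = fe R deli i := by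
  simp [fe, FreeAlgebra.star_smul]

theorem commute_one_sub_smul_sub {S B : Type*} [CommRing S] [Ring B] [Algebra S B] {x y z : B}
    (hxy : x * y = 1) (hyx : y * x = 1) (hxz : Commute x z) (d : S) :
    Commute (1 - d • (x - y)) z :=
  have hyz : Commute y z := hxz.units_inv_left (u := ⟨x, y, hxy, hyx⟩)
  (Commute.one_left z).sub_left ((hxz.sub_left hyz).smul_left d)

variable {R lam lami deli q0 q1 A n}

theorem mk_fe_mul_fY_mul_fX_mul_fY (h : 0 < n) (i : Fin (n - 1)) (hi : (i : ℕ) = 0) :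
    mk R lam lami deli q0 q1 A n (fe R deli i * (fY R h * (fX R i * fY R h))) =
      mk R lam lami deli q0 q1 A n (fe R deli i) := by
  set π := mk R lam lami deli q0 q1 A n
  have rel {a b} (h : Rel R lam lami deli q0 q1 A n a b) : π a = π b := RingQuot.mkAlgHom_rel R h
  have hX : Commute (π (fX R i)) (π (fY R h * fX R i * fY R h)) := by
    simpa only [Commute, SemiconjBy, ← map_mul, mul_assoc] using rel (Rel.bYXYX h i hi)
  have he : Commute (π (fe R deli i)) (π (fY R h * fX R i * fY R h)) := by
    simpa only [fe, map_sub, map_one, map_smul] using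
      commute_one_sub_smul_sub (by rw [← map_mul, ← map_one π]; exact rel (Rel.XXinv i))
        (by rw [← map_mul, ← map_one π]; exact rel (Rel.XinvX i)) hX deli
  calc π (fe R deli i * (fY R h * (fX R i * fY R h)))
      = π (fe R deli i) * π (fY R h * fX R i * fY R h) := by simp only [map_mul, mul_assoc]
    _ = π (fY R h * fX R i * fY R h) * π (fe R deli i) := he.eq
    _ = π (fe R deli i) := by rw [← map_mul]; exact rel (Rel.YXYe h i hi)

theorem mk_star_eq_of_rel {a b : FreeAlgebra R (Gen n)} (h : Rel R lam lami deli q0 q1 A n a b) :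
    mk R lam lami deli q0 q1 A n (star a) = mk R lam lami deli q0 q1 A n (star b) := by
  have rel {a b} (h : Rel R lam lami deli q0 q1 A n a b) :
      mk R lam lami deli q0 q1 A n a = mk R lam lami deli q0 q1 A n b := RingQuot.mkAlgHom_rel R h
  induction h with
  | XXinv i => simpa using rel (Rel.XinvX i)
  | XinvX i => simpa using rel (Rel.XXinv i)
  | YYinv h => simpa using rel (Rel.YinvY h)
  | YinvY h => simpa using rel (Rel.YYinv h)
  | comm i j hij => simpa using (rel (Rel.comm i j hij)).symm
  | braid i j hij => simpa [mul_assoc] using rel (Rel.braid i j hij)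
  | Xe i => simpa [FreeAlgebra.star_smul] using rel (Rel.eX i)
  | eX i => simpa [FreeAlgebra.star_smul] using rel (Rel.Xe i)
  | eXe i j hij => simpa [FreeAlgebra.star_smul, mul_assoc] using rel (Rel.eXe i j hij)
  | eXinve i j hij =>
    simpa [FreeAlgebra.star_smul, mul_assoc] using rel (Rel.eXinve i j hij)
  | bYXYX h i hi => simpa [mul_assoc] using (rel (Rel.bYXYX h i hi)).symm
  | Ysq h => simpa [FreeAlgebra.star_smul] using rel (Rel.Ysq h)
  | YXYe h i hi => simpa using mk_fe_mul_fY_mul_fX_mul_fY h i hi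
  | Ycomm h i hi => simpa using (rel (Rel.Ycomm h i hi)).symm
  | eYe h i hi => simpa [FreeAlgebra.star_smul, mul_assoc] using rel (Rel.eYe h i hi)

variable (R lam lami deli q0 q1 A n)

noncomputable def rev : BB R lam lami deli q0 q1 A n →ₐ[R] (BB R lam lami deli q0 q1 A n)ᵐᵒᵖ :=
  RingQuot.liftAlgHom R ⟨(mk R lam lami deli q0 q1 A n).op.comp FreeAlgebra.starHom.toAlgHom,
    fun _ _ h => congrArg MulOpposite.op (mk_star_eq_of_rel h)⟩

theorem rev_mk (a : FreeAlgebra R (Gen n)) :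
    rev R lam lami deli q0 q1 A n (mk R lam lami deli q0 q1 A n a) =
      MulOpposite.op (mk R lam lami deli q0 q1 A n (star a)) :=
  RingQuot.liftAlgHom_mkAlgHom_apply _ _ _ _

theorem BB_involution_general (R : Type) [CommRing R]
    (lam lami deli q0 q1 A : R) (n : ℕ) :
    ∃ ρ : BB R lam lami deli q0 q1 A n →ₐ[R] (BB R lam lami deli q0 q1 A n)ᵐᵒᵖ,
      (∀ i, 1 ≤ i → i ≤ n - 1 → ρ (XX R lam lami deli q0 q1 A n i) = MulOpposite.op (XX R lam lami deli q0 q1 A n i)) ∧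
      ρ (YY R lam lami deli q0 q1 A n) = MulOpposite.op (YY R lam lami deli q0 q1 A n) ∧
      (∀ a, (ρ ((ρ a).unop)).unop = a) := by
  refine ⟨rev R lam lami deli q0 q1 A n, fun i _ _ => ?_, ?_, fun a => ?_⟩
  · unfold XX
    split_ifs <;> simp [rev_mk, fX]
  · unfold YY
    split_ifs <;> simp [rev_mk, fY]
  · obtain ⟨a, rfl⟩ : ∃ b, mk R lam lami deli q0 q1 A n b = a :=
      RingQuot.mkAlgHom_surjective R _ a
    simp [rev_mk]

/-- Remark 6: `BB_n(R)` has an involutive `R`-algebra anti-automorphism fixing all generators,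
i.e. an algebra homomorphism to the opposite algebra fixing each `X_i` and `Y` whose square
is the identity. -/
theorem BB_involution (R : Type) [CommRing R] [IsDomain R]
    (q qi lam lami del deli q0 q0i q1 A x : R)
    (hq : q * qi = 1) (hlam : lam * lami = 1) (hdel : del * deli = 1) (hq0u : q0 * q0i = 1)
    (hdelta : del = q - qi) (hx : x * del = del - lam + lami) (n : ℕ) :
    ∃ ρ : BB R lam lami deli q0 q1 A n →ₐ[R] (BB R lam lami deli q0 q1 A n)ᵐᵒᵖ,
      (∀ i, 1 ≤ i → i ≤ n - 1 → ρ (XX R lam lami deli q0 q1 A n i) = MulOpposite.op (XX R lam lami deli q0 q1 A n i)) ∧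
      ρ (YY R lam lami deli q0 q1 A n) = MulOpposite.op (YY R lam lami deli q0 q1 A n) ∧
      (∀ a, (ρ ((ρ a).unop)).unop = a) :=
  BB_involution_general R lam lami deli q0 q1 A n

end BMWB
end

section
/- In BB_{2n}(R), the element H_n satisfies: (i) H_n = E(n,n)·E(n−1,n+1)·E(n−2,n+2)⋯E(1,2n−1); (ii) X_i^{±1}·H_n = X_{2n−i}^{±1}·H_n and e_i·H_n = e_{2n−i}·H_n for 1 ≤ i ≤ n−1; (iii) Y^{±1}·H_n = λ^{±1}·(Y'_{2n})^{∓1}·H_n. -/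
namespace BMWB

variable (R : Type) [CommRing R]

variable (lam lami deli q0 q1 A : R) (n : ℕ)

section Helpers

variable {M : Type*} [Semigroup M]

theorem wmul2 {a b c : M} (h : a * b = c) (z : M) : a * (b * z) = c * z := by
  rw [← mul_assoc, h]

theorem wmul3 {a b c d : M} (h : a * b * c = d) (z : M) : a * (b * (c * z)) = d * z := by
  rw [← mul_assoc, ← mul_assoc, h]

theorem wcomm {a b : M} (h : Commute a b) (z : M) : a * (b * z) = b * (a * z) := by
  rw [← mul_assoc, h.eq, mul_assoc]

theorem cancel_left {M : Type*} [Monoid M] {u ui a b : M} (hu : ui * u = 1)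
    (h : u * a = u * b) : a = b := by
  have : ui * (u * a) = ui * (u * b) := by rw [h]
  rwa [← mul_assoc, ← mul_assoc, hu, one_mul, one_mul] at this

theorem cancel_right {M : Type*} [Monoid M] {u ui a b : M} (hu : u * ui = 1)
    (h : a * u = b * u) : a = b := by
  have : a * u * ui = b * u * ui := by rw [h]
  rwa [mul_assoc, mul_assoc, hu, mul_one, mul_one] at this

end Helpers

section Smul

variable {R : Type*} [CommRing R] {M : Type*} [Ring M] [Algebra R M]

theorem wmuls {a b c : M} {r : R} (h : a * b = r • c) (z : M) : a * (b * z) = r • (c * z) := by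
  rw [← mul_assoc, h, smul_mul_assoc]

theorem commute_smul_right {a b : M} (r : R) (h : Commute a b) : Commute a (r • b) := by
  show _ * _ = _ * _
  rw [mul_smul_comm, smul_mul_assoc, h.eq]

end Smul

section BaseRel

variable {R : Type} [CommRing R] {lam lami deli q0 q1 A : R} {N : ℕ}

local notation "gmk" => mk R lam lami deli q0 q1 A N
local notation "gX" => XX R lam lami deli q0 q1 A N
local notation "gXi" => XXi R lam lami deli q0 q1 A N
local notation "gY" => YY R lam lami deli q0 q1 A N
local notation "gYi" => YYi R lam lami deli q0 q1 A N
local notation "ge" => ee R lam lami deli q0 q1 A N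

theorem mk_rel {a b : FreeAlgebra R (Gen N)} (h : Rel R lam lami deli q0 q1 A N a b) :
    gmk a = gmk b :=
  RingQuot.mkAlgHom_rel R h

theorem XX_eq_s14 (i : ℕ) (h : i - 1 < N - 1) : gX i = gmk (fX R ⟨i - 1, h⟩) := dif_pos h

theorem XXi_eq_s14 (i : ℕ) (h : i - 1 < N - 1) : gXi i = gmk (fXinv R ⟨i - 1, h⟩) := dif_pos h

theorem YY_eq_s14 (h : 0 < N) : gY = gmk (fY R h) := dif_pos h

theorem YYi_eq_s14 (h : 0 < N) : gYi = gmk (fYinv R h) := dif_pos h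

theorem ee_eq_s14 (i : ℕ) (h : i - 1 < N - 1) : ge i = gmk (fe R deli ⟨i - 1, h⟩) := by
  rw [fe, map_sub, map_one, map_smul, map_sub, ee, XX_eq_s14 i h, XXi_eq_s14 i h]

/-- index bound helper -/
theorem idx_lt {i : ℕ} (h1 : 1 ≤ i) (h2 : i ≤ N - 1) : i - 1 < N - 1 := by omega

theorem bXXi_s14 {i : ℕ} (h1 : 1 ≤ i) (h2 : i ≤ N - 1) : gX i * gXi i = 1 := by
  rw [XX_eq_s14 i (idx_lt h1 h2), XXi_eq_s14 i (idx_lt h1 h2), ← map_mul, ← map_one gmk]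
  exact mk_rel (Rel.XXinv _)

theorem bXiX_s14 {i : ℕ} (h1 : 1 ≤ i) (h2 : i ≤ N - 1) : gXi i * gX i = 1 := by
  rw [XX_eq_s14 i (idx_lt h1 h2), XXi_eq_s14 i (idx_lt h1 h2), ← map_mul, ← map_one gmk]
  exact mk_rel (Rel.XinvX _)

theorem bYYi_s14 (h : 0 < N) : gY * gYi = 1 := by
  rw [YY_eq_s14 h, YYi_eq_s14 h, ← map_mul, ← map_one gmk]
  exact mk_rel (Rel.YYinv _)

theorem bYiY_s14 (h : 0 < N) : gYi * gY = 1 := by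
  rw [YY_eq_s14 h, YYi_eq_s14 h, ← map_mul, ← map_one gmk]
  exact mk_rel (Rel.YinvY _)

theorem bXe {i : ℕ} (h1 : 1 ≤ i) (h2 : i ≤ N - 1) : gX i * ge i = lam • ge i := by
  rw [XX_eq_s14 i (idx_lt h1 h2), ee_eq_s14 i (idx_lt h1 h2), ← map_mul, ← map_smul]
  exact mk_rel (Rel.Xe _)

theorem beX {i : ℕ} (h1 : 1 ≤ i) (h2 : i ≤ N - 1) : ge i * gX i = lam • ge i := by
  rw [XX_eq_s14 i (idx_lt h1 h2), ee_eq_s14 i (idx_lt h1 h2), ← map_mul, ← map_smul]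
  exact mk_rel (Rel.eX _)

theorem bbraid_s14 {i : ℕ} (h1 : 1 ≤ i) (h2 : i + 1 ≤ N - 1) :
    gX i * gX (i + 1) * gX i = gX (i + 1) * gX i * gX (i + 1) := by
  rw [XX_eq_s14 i (idx_lt h1 (by omega)), XX_eq_s14 (i + 1) (idx_lt (by omega) h2),
    ← map_mul, ← map_mul, ← map_mul, ← map_mul]
  exact mk_rel (Rel.braid _ _ (by simp; omega))

theorem bcomm_s14 {i j : ℕ} (h1 : 1 ≤ i) (hij : i + 2 ≤ j) (h2 : j ≤ N - 1) :
    gX j * gX i = gX i * gX j := by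
  rw [XX_eq_s14 i (idx_lt h1 (by omega)), XX_eq_s14 j (idx_lt (by omega) h2),
    ← map_mul, ← map_mul]
  exact mk_rel (Rel.comm _ _ (by simp; omega))

theorem beXe {i : ℕ} (h1 : 1 ≤ i) (h2 : i + 1 ≤ N - 1) :
    ge (i + 1) * gX i * ge (i + 1) = lami • ge (i + 1) := by
  rw [XX_eq_s14 i (idx_lt h1 (by omega)), ee_eq_s14 (i + 1) (idx_lt (by omega) h2),
    ← map_mul, ← map_mul, ← map_smul]
  exact mk_rel (Rel.eXe _ _ (by simp; omega))

theorem beXie {i : ℕ} (h1 : 1 ≤ i) (h2 : i + 1 ≤ N - 1) :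
    ge (i + 1) * gXi i * ge (i + 1) = lam • ge (i + 1) := by
  rw [XXi_eq_s14 i (idx_lt h1 (by omega)), ee_eq_s14 (i + 1) (idx_lt (by omega) h2),
    ← map_mul, ← map_mul, ← map_smul]
  exact mk_rel (Rel.eXinve _ _ (by simp; omega))

theorem bYXYe (h2 : 2 ≤ N) : gY * gX 1 * gY * ge 1 = ge 1 := by
  rw [XX_eq_s14 1 (idx_lt le_rfl (by omega)), ee_eq_s14 1 (idx_lt le_rfl (by omega)), YY_eq_s14 (by omega),
    ← map_mul, ← map_mul, ← map_mul]
  exact mk_rel (Rel.YXYe _ _ (by simp))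

theorem bYcomm_s14 {i : ℕ} (h1 : 2 ≤ i) (h2 : i ≤ N - 1) : gY * gX i = gX i * gY := by
  rw [XX_eq_s14 i (idx_lt (by omega) h2), YY_eq_s14 (by omega), ← map_mul, ← map_mul]
  exact mk_rel (Rel.Ycomm _ _ (by simp; omega))

end BaseRel
section Derived

variable {R : Type} [CommRing R] {lam lami deli q0 q1 A : R} {N : ℕ}

local notation "gX" => XX R lam lami deli q0 q1 A N
local notation "gXi" => XXi R lam lami deli q0 q1 A N
local notation "gY" => YY R lam lami deli q0 q1 A N
local notation "gYi" => YYi R lam lami deli q0 q1 A N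
local notation "ge" => ee R lam lami deli q0 q1 A N

theorem beXi (hlam : lam * lami = 1) {i : ℕ} (h1 : 1 ≤ i) (h2 : i ≤ N - 1) :
    ge i * gXi i = lami • ge i := by
  have hlam' : lami * lam = 1 := by rw [mul_comm] at hlam; exact hlam
  calc ge i * gXi i = ((lami * lam) • ge i) * gXi i := by rw [hlam', one_smul]
    _ = lami • (ge i * gX i) * gXi i := by rw [← smul_smul, beX h1 h2]
    _ = lami • (ge i * (gX i * gXi i)) := by rw [smul_mul_assoc, mul_assoc]
    _ = lami • ge i := by rw [bXXi_s14 h1 h2, mul_one]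

theorem bXie (hlam : lam * lami = 1) {i : ℕ} (h1 : 1 ≤ i) (h2 : i ≤ N - 1) :
    gXi i * ge i = lami • ge i := by
  have hlam' : lami * lam = 1 := by rw [mul_comm] at hlam; exact hlam
  calc gXi i * ge i = gXi i * ((lami * lam) • ge i) := by rw [hlam', one_smul]
    _ = lami • (gXi i * (gX i * ge i)) := by rw [← smul_smul, bXe h1 h2, mul_smul_comm]
    _ = lami • ge i := by rw [wmul2 (bXiX_s14 h1 h2), one_mul]

/-! ### Braid variants -/

theorem bv1 {i : ℕ} (h1 : 1 ≤ i) (h2 : i + 1 ≤ N - 1) :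
    gX (i + 1) * gX i * gXi (i + 1) = gXi i * (gX (i + 1) * gX i) := by
  have hi : i ≤ N - 1 := by omega
  apply cancel_left (bXiX_s14 h1 hi)
  rw [← mul_assoc, ← mul_assoc, bbraid_s14 h1 h2, mul_assoc, bXXi_s14 (by omega) h2, mul_one,
    ← mul_assoc, ← mul_assoc, bXXi_s14 h1 hi, one_mul]

theorem bv2 {i : ℕ} (h1 : 1 ≤ i) (h2 : i + 1 ≤ N - 1) :
    gXi (i + 1) * gX i * gX (i + 1) = gX i * gX (i + 1) * gXi i := by
  have hi : i ≤ N - 1 := by omega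
  apply cancel_left (bXiX_s14 (by omega) h2)
  rw [← mul_assoc, ← mul_assoc, bXXi_s14 (by omega) h2, one_mul, ← mul_assoc, ← mul_assoc,
    ← bbraid_s14 h1 h2, mul_assoc, mul_assoc, bXXi_s14 h1 hi, mul_one]

theorem bv3 {i : ℕ} (h1 : 1 ≤ i) (h2 : i + 1 ≤ N - 1) :
    gX (i + 1) * gXi i * gXi (i + 1) = gXi i * gXi (i + 1) * gX i := by
  have hi : i ≤ N - 1 := by omega
  have hR : gXi i * gXi (i + 1) * gX i * gX (i + 1) = gX (i + 1) * gXi i := by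
    apply cancel_left (bXiX_s14 h1 hi)
    rw [← mul_assoc, ← mul_assoc, ← mul_assoc, bXXi_s14 h1 hi, one_mul, bv2 h1 h2, ← mul_assoc]
  apply cancel_right (bXXi_s14 (by omega) h2)
  rw [mul_assoc, bXiX_s14 (by omega) h2, mul_one, hR]

theorem bv4 {i : ℕ} (h1 : 1 ≤ i) (h2 : i + 1 ≤ N - 1) :
    gXi (i + 1) * gXi i * gX (i + 1) = gX i * gXi (i + 1) * gXi i := by
  have hi : i ≤ N - 1 := by omega
  apply cancel_left (bXiX_s14 (by omega) h2)
  rw [← mul_assoc, ← mul_assoc, bXXi_s14 (by omega) h2, one_mul, ← mul_assoc, ← mul_assoc,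
    bv1 h1 h2, mul_assoc, mul_assoc, bXXi_s14 h1 hi, mul_one]

/-! ### Conjugation of `e` by braid pairs -/

theorem conj_e1 {i : ℕ} (h1 : 1 ≤ i) (h2 : i + 1 ≤ N - 1) :
    gX (i + 1) * (gX i * ge (i + 1)) = ge i * (gX (i + 1) * gX i) := by
  simp only [ee, mul_sub, sub_mul, mul_one, one_mul, mul_smul_comm, smul_mul_assoc, smul_sub]
  rw [← mul_assoc, ← mul_assoc, ← mul_assoc, ← mul_assoc, bbraid_s14 h1 h2, bv1 h1 h2,
    ← mul_assoc]

theorem conj_e2 {i : ℕ} (h1 : 1 ≤ i) (h2 : i + 1 ≤ N - 1) :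
    gX i * (gX (i + 1) * ge i) = ge (i + 1) * (gX i * gX (i + 1)) := by
  simp only [ee, mul_sub, sub_mul, mul_one, one_mul, mul_smul_comm, smul_mul_assoc, smul_sub]
  rw [← mul_assoc, ← mul_assoc, ← mul_assoc, ← mul_assoc, ← bbraid_s14 h1 h2, ← bv2 h1 h2]

theorem inv_pair {M : Type*} [Monoid M] {a b ai bi : M} (ha : a * ai = 1) (hb : b * bi = 1) :
    (a * b) * (bi * ai) = 1 := by
  rw [mul_assoc, ← mul_assoc b, hb, one_mul, ha]

theorem swap_conj {M : Type*} [Monoid M] {u ui a b : M} (huu : u * ui = 1) (huiu : ui * u = 1)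
    (h : u * a = b * u) : a * ui = ui * b := by
  calc a * ui = (ui * u) * (a * ui) := by rw [huiu, one_mul]
    _ = ui * ((u * a) * ui) := by rw [mul_assoc, ← mul_assoc u]
    _ = ui * (b * (u * ui)) := by rw [h, mul_assoc]
    _ = ui * b := by rw [huu, mul_one]

theorem conj_e1' {i : ℕ} (h1 : 1 ≤ i) (h2 : i + 1 ≤ N - 1) :
    ge (i + 1) * (gXi i * gXi (i + 1)) = gXi i * (gXi (i + 1) * ge i) := by
  have hi : i ≤ N - 1 := by omega
  have h := swap_conj (inv_pair (bXXi_s14 (by omega) h2) (bXXi_s14 h1 hi))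
    (inv_pair (bXiX_s14 h1 hi) (bXiX_s14 (by omega) h2))
    (show (gX (i+1) * gX i) * ge (i + 1) = ge i * (gX (i+1) * gX i) from by
      rw [mul_assoc]; exact conj_e1 h1 h2)
  rw [← mul_assoc] at h ⊢; exact h.trans (by rw [mul_assoc])

theorem conj_e2' {i : ℕ} (h1 : 1 ≤ i) (h2 : i + 1 ≤ N - 1) :
    ge i * (gXi (i + 1) * gXi i) = gXi (i + 1) * (gXi i * ge (i + 1)) := by
  have hi : i ≤ N - 1 := by omega
  have h := swap_conj (inv_pair (bXXi_s14 h1 hi) (bXXi_s14 (by omega) h2))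
    (inv_pair (bXiX_s14 (by omega) h2) (bXiX_s14 h1 hi))
    (show (gX i * gX (i+1)) * ge i = ge (i + 1) * (gX i * gX (i+1)) from by
      rw [mul_assoc]; exact conj_e2 h1 h2)
  rw [← mul_assoc] at h ⊢; exact h.trans (by rw [mul_assoc])

end Derived
theorem tail_eq {M : Type*} [Mul M] {a b : M} (h : a = b) (z : M) : a * z = b * z := by rw [h]

theorem commute_inv_left {M : Type*} [Monoid M] {u ui v : M} (hu : ui * u = 1)
    (hu' : u * ui = 1) (h : Commute u v) : Commute ui v := by
  show ui * v = v * ui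
  calc ui * v = ui * (v * (u * ui)) := by rw [hu', mul_one]
    _ = ui * (u * (v * ui)) := by rw [← mul_assoc v, ← h.eq, mul_assoc]
    _ = (ui * u) * (v * ui) := by rw [mul_assoc]
    _ = v * ui := by rw [hu, one_mul]

section Derived2

variable {R : Type} [CommRing R] {lam lami deli q0 q1 A : R} {N : ℕ}

local notation "gX" => XX R lam lami deli q0 q1 A N
local notation "gXi" => XXi R lam lami deli q0 q1 A N
local notation "gY" => YY R lam lami deli q0 q1 A N
local notation "gYi" => YYi R lam lami deli q0 q1 A N
local notation "ge" => ee R lam lami deli q0 q1 A N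

/-! ### tailed basic rules -/

theorem bXXi_t {i : ℕ} (h1 : 1 ≤ i) (h2 : i ≤ N - 1) (z) : gX i * (gXi i * z) = z := by
  simpa only [mul_assoc, one_mul] using tail_eq (bXXi_s14 h1 h2) z

theorem bXiX_t {i : ℕ} (h1 : 1 ≤ i) (h2 : i ≤ N - 1) (z) : gXi i * (gX i * z) = z := by
  simpa only [mul_assoc, one_mul] using tail_eq (bXiX_s14 h1 h2) z

theorem bYYi_t (h : 0 < N) (z) : gY * (gYi * z) = z := by
  simpa only [mul_assoc, one_mul] using tail_eq (bYYi_s14 h) z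

theorem bYiY_t (h : 0 < N) (z) : gYi * (gY * z) = z := by
  simpa only [mul_assoc, one_mul] using tail_eq (bYiY_s14 h) z

theorem bXe_t {i : ℕ} (h1 : 1 ≤ i) (h2 : i ≤ N - 1) (z) :
    gX i * (ge i * z) = lam • (ge i * z) := by
  simpa only [mul_assoc, smul_mul_assoc] using tail_eq (bXe h1 h2) z

theorem beX_t {i : ℕ} (h1 : 1 ≤ i) (h2 : i ≤ N - 1) (z) :
    ge i * (gX i * z) = lam • (ge i * z) := by
  simpa only [mul_assoc, smul_mul_assoc] using tail_eq (beX h1 h2) z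

theorem beXi_t (hlam : lam * lami = 1) {i : ℕ} (h1 : 1 ≤ i) (h2 : i ≤ N - 1) (z) :
    ge i * (gXi i * z) = lami • (ge i * z) := by
  simpa only [mul_assoc, smul_mul_assoc] using tail_eq (beXi hlam h1 h2) z

theorem bXie_t (hlam : lam * lami = 1) {i : ℕ} (h1 : 1 ≤ i) (h2 : i ≤ N - 1) (z) :
    gXi i * (ge i * z) = lami • (ge i * z) := by
  simpa only [mul_assoc, smul_mul_assoc] using tail_eq (bXie hlam h1 h2) z

theorem beXe_t {i : ℕ} (h1 : 1 ≤ i) (h2 : i + 1 ≤ N - 1) (z) :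
    ge (i + 1) * (gX i * (ge (i + 1) * z)) = lami • (ge (i + 1) * z) := by
  simpa only [mul_assoc, smul_mul_assoc] using tail_eq (beXe h1 h2) z

theorem beXie_t {i : ℕ} (h1 : 1 ≤ i) (h2 : i + 1 ≤ N - 1) (z) :
    ge (i + 1) * (gXi i * (ge (i + 1) * z)) = lam • (ge (i + 1) * z) := by
  simpa only [mul_assoc, smul_mul_assoc] using tail_eq (beXie h1 h2) z

theorem bv1r {i : ℕ} (h1 : 1 ≤ i) (h2 : i + 1 ≤ N - 1) :
    gX (i + 1) * (gX i * gXi (i + 1)) = gXi i * (gX (i + 1) * gX i) := by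
  rw [← mul_assoc]; exact bv1 h1 h2

theorem bv2r {i : ℕ} (h1 : 1 ≤ i) (h2 : i + 1 ≤ N - 1) :
    gXi (i + 1) * (gX i * gX (i + 1)) = gX i * (gX (i + 1) * gXi i) := by
  rw [← mul_assoc, bv2 h1 h2, mul_assoc]

theorem bv3r {i : ℕ} (h1 : 1 ≤ i) (h2 : i + 1 ≤ N - 1) :
    gX (i + 1) * (gXi i * gXi (i + 1)) = gXi i * (gXi (i + 1) * gX i) := by
  rw [← mul_assoc, bv3 h1 h2, mul_assoc]

theorem bv4r {i : ℕ} (h1 : 1 ≤ i) (h2 : i + 1 ≤ N - 1) :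
    gXi (i + 1) * (gXi i * gX (i + 1)) = gX i * (gXi (i + 1) * gXi i) := by
  rw [← mul_assoc, bv4 h1 h2, mul_assoc]

theorem conj_e1_t {i : ℕ} (h1 : 1 ≤ i) (h2 : i + 1 ≤ N - 1) (z) :
    gX (i + 1) * (gX i * (ge (i + 1) * z)) = ge i * (gX (i + 1) * (gX i * z)) := by
  simpa only [mul_assoc] using tail_eq (conj_e1 h1 h2) z

theorem conj_e2_t {i : ℕ} (h1 : 1 ≤ i) (h2 : i + 1 ≤ N - 1) (z) :
    gX i * (gX (i + 1) * (ge i * z)) = ge (i + 1) * (gX i * (gX (i + 1) * z)) := by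
  simpa only [mul_assoc] using tail_eq (conj_e2 h1 h2) z

theorem conj_e1'_t {i : ℕ} (h1 : 1 ≤ i) (h2 : i + 1 ≤ N - 1) (z) :
    ge (i + 1) * (gXi i * (gXi (i + 1) * z)) = gXi i * (gXi (i + 1) * (ge i * z)) := by
  simpa only [mul_assoc] using tail_eq (conj_e1' h1 h2) z

theorem conj_e2'_t {i : ℕ} (h1 : 1 ≤ i) (h2 : i + 1 ≤ N - 1) (z) :
    ge i * (gXi (i + 1) * (gXi i * z)) = gXi (i + 1) * (gXi i * (ge (i + 1) * z)) := by
  simpa only [mul_assoc] using tail_eq (conj_e2' h1 h2) z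

/-! ### `e_i X_{i+1}^{±1} e_i` -/

theorem T3f (hlam : lam * lami = 1) {i : ℕ} (h1 : 1 ≤ i) (h2 : i + 1 ≤ N - 1) :
    ge i * (gX (i + 1) * ge i) = lami • ge i := by
  have hi : i ≤ N - 1 := by omega
  have hlam' : lami * lam = 1 := by rw [mul_comm] at hlam; exact hlam
  have way1 : gX (i+1) * (gX i * (ge (i+1) * (gX i * (ge (i+1) * (gXi i * gXi (i+1))))))
      = lami • ge i := by
    rw [beXe_t h1 h2, mul_smul_comm, mul_smul_comm, conj_e1' h1 h2,
      bXXi_t h1 hi, bXXi_t (by omega) h2]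
  have way2 : gX (i+1) * (gX i * (ge (i+1) * (gX i * (ge (i+1) * (gXi i * gXi (i+1))))))
      = ge i * (gX (i + 1) * ge i) := by
    rw [conj_e1_t h1 h2, conj_e1' h1 h2, bXXi_t h1 hi,
      show ∀ z, gX (i+1) * (gX i * (gXi (i+1) * z)) = gXi i * (gX (i+1) * (gX i * z)) from
        fun z => by simpa only [mul_assoc] using tail_eq (bv1r h1 h2) z]
    rw [bXe h1 hi, mul_smul_comm, mul_smul_comm, mul_smul_comm, beXi_t hlam h1 hi,
      smul_smul, mul_comm lam lami, hlam', one_smul]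
  rw [← way2, way1]

theorem T3fi (hlam : lam * lami = 1) {i : ℕ} (h1 : 1 ≤ i) (h2 : i + 1 ≤ N - 1) :
    ge i * (gXi (i + 1) * ge i) = lam • ge i := by
  have hi : i ≤ N - 1 := by omega
  have hlam' : lami * lam = 1 := by rw [mul_comm] at hlam; exact hlam
  have way1 : gX (i+1) * (gX i * (ge (i+1) * (gXi i * (ge (i+1) * (gXi i * gXi (i+1))))))
      = lam • ge i := by
    rw [beXie_t h1 h2, mul_smul_comm, mul_smul_comm, conj_e1' h1 h2,
      bXXi_t h1 hi, bXXi_t (by omega) h2]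
  have way2 : gX (i+1) * (gX i * (ge (i+1) * (gXi i * (ge (i+1) * (gXi i * gXi (i+1))))))
      = ge i * (gXi (i + 1) * ge i) := by
    rw [conj_e1_t h1 h2, conj_e1' h1 h2, bXXi_t h1 hi,
      show ∀ z, gX (i+1) * (gXi i * (gXi (i+1) * z)) = gXi i * (gXi (i+1) * (gX i * z)) from
        fun z => by simpa only [mul_assoc] using tail_eq (bv3r h1 h2) z]
    rw [bXe h1 hi, mul_smul_comm, mul_smul_comm, mul_smul_comm, beXi_t hlam h1 hi,
      smul_smul, mul_comm lam lami, hlam', one_smul]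
  rw [← way2, way1]

theorem T3f_t (hlam : lam * lami = 1) {i : ℕ} (h1 : 1 ≤ i) (h2 : i + 1 ≤ N - 1) (z) :
    ge i * (gX (i + 1) * (ge i * z)) = lami • (ge i * z) := by
  simpa only [mul_assoc, smul_mul_assoc] using tail_eq (T3f hlam h1 h2) z

theorem T3fi_t (hlam : lam * lami = 1) {i : ℕ} (h1 : 1 ≤ i) (h2 : i + 1 ≤ N - 1) (z) :
    ge i * (gXi (i + 1) * (ge i * z)) = lam • (ge i * z) := by
  simpa only [mul_assoc, smul_mul_assoc] using tail_eq (T3fi hlam h1 h2) z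

end Derived2
section Derived3

variable {R : Type} [CommRing R] {lam lami deli q0 q1 A : R} {N : ℕ}

local notation "gX" => XX R lam lami deli q0 q1 A N
local notation "gXi" => XXi R lam lami deli q0 q1 A N
local notation "gY" => YY R lam lami deli q0 q1 A N
local notation "gYi" => YYi R lam lami deli q0 q1 A N
local notation "ge" => ee R lam lami deli q0 q1 A N

theorem ee_expand (i : ℕ) : ge i = 1 - deli • (gX i - gXi i) := rfl

theorem e_sq (hlam : lam * lami = 1) {i : ℕ} (h1 : 1 ≤ i) (h2 : i ≤ N - 1) :
    ge i * ge i = (1 - deli * lam + deli * lami) • ge i := by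
  nth_rewrite 2 [ee_expand i]
  rw [mul_sub, mul_one, mul_smul_comm, mul_sub, beX h1 h2, beXi hlam h1 h2]
  simp only [smul_sub, smul_smul]
  module

theorem e_sq_t (hlam : lam * lami = 1) {i : ℕ} (h1 : 1 ≤ i) (h2 : i ≤ N - 1) (z) :
    ge i * (ge i * z) = (1 - deli * lam + deli * lami) • (ge i * z) := by
  simpa only [mul_assoc, smul_mul_assoc] using tail_eq (e_sq hlam h1 h2) z

theorem T1a_t (hlam : lam * lami = 1) {i : ℕ} (h1 : 1 ≤ i) (h2 : i + 1 ≤ N - 1) (z) :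
    ge (i + 1) * (ge i * (ge (i + 1) * z)) = ge (i + 1) * z := by
  nth_rewrite 1 [ee_expand i]
  rw [sub_mul, one_mul, smul_mul_assoc, sub_mul, mul_sub, mul_smul_comm, mul_sub,
    beXe_t h1 h2, beXie_t h1 h2, e_sq_t hlam (by omega) h2]
  simp only [smul_sub, smul_smul]
  module

theorem T1b_t (hlam : lam * lami = 1) {i : ℕ} (h1 : 1 ≤ i) (h2 : i + 1 ≤ N - 1) (z) :
    ge i * (ge (i + 1) * (ge i * z)) = ge i * z := by
  nth_rewrite 1 [ee_expand (i + 1)]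
  rw [sub_mul, one_mul, smul_mul_assoc, sub_mul, mul_sub, mul_smul_comm, mul_sub,
    T3f_t hlam h1 h2, T3fi_t hlam h1 h2, e_sq_t hlam h1 (by omega)]
  simp only [smul_sub, smul_smul]
  module

/-! ### the `e e = X X e` family -/

theorem eshift1 {i : ℕ} (h1 : 1 ≤ i) (h2 : i + 1 ≤ N - 1) :
    ge (i + 1) = gXi i * (gXi (i + 1) * (ge i * (gX (i + 1) * gX i))) := by
  have h5 : gXi i * (gXi (i + 1) * (gX (i + 1) * (gX i * ge (i + 1)))) = ge (i + 1) := by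
    rw [bXiX_t (by omega) h2, bXiX_t h1 (by omega)]
  rw [← h5, conj_e1 h1 h2]

theorem eshift3 {i : ℕ} (h1 : 1 ≤ i) (h2 : i + 1 ≤ N - 1) :
    ge (i + 1) = gX i * (gX (i + 1) * (ge i * (gXi (i + 1) * gXi i))) := by
  have h5 : gX i * (gX (i + 1) * (ge i * (gXi (i + 1) * gXi i))) =
      ge (i + 1) * (gX i * (gX (i + 1) * (gXi (i + 1) * gXi i))) := by
    rw [conj_e2_t h1 h2]
  rw [h5, bXXi_t (by omega) h2, bXXi_s14 h1 (by omega), mul_one]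

theorem eshift2 {i : ℕ} (h1 : 1 ≤ i) (h2 : i + 1 ≤ N - 1) :
    ge i = gXi (i + 1) * (gXi i * (ge (i + 1) * (gX i * gX (i + 1)))) := by
  have h5 : gXi (i + 1) * (gXi i * (gX i * (gX (i + 1) * ge i))) = ge i := by
    rw [bXiX_t h1 (by omega), bXiX_t (by omega) h2]
  rw [← h5, conj_e2 h1 h2]

theorem eshift4 {i : ℕ} (h1 : 1 ≤ i) (h2 : i + 1 ≤ N - 1) :
    ge i = gX (i + 1) * (gX i * (ge (i + 1) * (gXi i * gXi (i + 1)))) := by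
  have h5 : gX (i + 1) * (gX i * (gXi i * (gXi (i + 1) * ge i))) = ge i := by
    rw [bXXi_t h1 (by omega), bXXi_t (by omega) h2]
  rw [← h5, ← conj_e1' h1 h2]

theorem D1 (hlam : lam * lami = 1) {i : ℕ} (h1 : 1 ≤ i) (h2 : i + 1 ≤ N - 1) :
    ge i * (gX (i + 1) * gX i) = ge i * ge (i + 1) := by
  have hi : i ≤ N - 1 := by omega
  have hlam' : lami * lam = 1 := by rw [mul_comm] at hlam; exact hlam
  conv_rhs => rw [eshift1 h1 h2]
  rw [beXi_t hlam h1 hi, T3fi_t hlam h1 h2, smul_smul, hlam', one_smul]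

theorem D1i (hlam : lam * lami = 1) {i : ℕ} (h1 : 1 ≤ i) (h2 : i + 1 ≤ N - 1) :
    ge i * (gXi (i + 1) * gXi i) = ge i * ge (i + 1) := by
  have hi : i ≤ N - 1 := by omega
  have hlam' : lami * lam = 1 := by rw [mul_comm] at hlam; exact hlam
  conv_rhs => rw [eshift3 h1 h2]
  rw [beX_t h1 hi, T3f_t hlam h1 h2, smul_smul, hlam, one_smul]

theorem D4 (hlam : lam * lami = 1) {i : ℕ} (h1 : 1 ≤ i) (h2 : i + 1 ≤ N - 1) :
    ge (i + 1) * (gX i * gX (i + 1)) = ge (i + 1) * ge i := by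
  have hlam' : lami * lam = 1 := by rw [mul_comm] at hlam; exact hlam
  conv_rhs => rw [eshift2 h1 h2]
  rw [beXi_t hlam (by omega) h2, beXie_t h1 h2, smul_smul, hlam', one_smul]

theorem D4i (hlam : lam * lami = 1) {i : ℕ} (h1 : 1 ≤ i) (h2 : i + 1 ≤ N - 1) :
    ge (i + 1) * (gXi i * gXi (i + 1)) = ge (i + 1) * ge i := by
  conv_rhs => rw [eshift4 h1 h2]
  rw [beX_t (by omega) h2, beXe_t h1 h2, smul_smul, hlam, one_smul]

theorem D1_t (hlam : lam * lami = 1) {i : ℕ} (h1 : 1 ≤ i) (h2 : i + 1 ≤ N - 1) (z) :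
    ge i * (gX (i + 1) * (gX i * z)) = ge i * (ge (i + 1) * z) := by
  simpa only [mul_assoc] using tail_eq (D1 hlam h1 h2) z

theorem D1i_t (hlam : lam * lami = 1) {i : ℕ} (h1 : 1 ≤ i) (h2 : i + 1 ≤ N - 1) (z) :
    ge i * (gXi (i + 1) * (gXi i * z)) = ge i * (ge (i + 1) * z) := by
  simpa only [mul_assoc] using tail_eq (D1i hlam h1 h2) z

theorem D4_t (hlam : lam * lami = 1) {i : ℕ} (h1 : 1 ≤ i) (h2 : i + 1 ≤ N - 1) (z) :
    ge (i + 1) * (gX i * (gX (i + 1) * z)) = ge (i + 1) * (ge i * z) := by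
  simpa only [mul_assoc] using tail_eq (D4 hlam h1 h2) z

theorem D4i_t (hlam : lam * lami = 1) {i : ℕ} (h1 : 1 ≤ i) (h2 : i + 1 ≤ N - 1) (z) :
    ge (i + 1) * (gXi i * (gXi (i + 1) * z)) = ge (i + 1) * (ge i * z) := by
  simpa only [mul_assoc] using tail_eq (D4i hlam h1 h2) z

theorem D2_t (hlam : lam * lami = 1) {i : ℕ} (h1 : 1 ≤ i) (h2 : i + 1 ≤ N - 1) (z) :
    gX (i + 1) * (gX i * (ge (i + 1) * z)) = ge i * (ge (i + 1) * z) := by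
  rw [conj_e1_t h1 h2, D1_t hlam h1 h2]

theorem D3_t (hlam : lam * lami = 1) {i : ℕ} (h1 : 1 ≤ i) (h2 : i + 1 ≤ N - 1) (z) :
    gX i * (gX (i + 1) * (ge i * z)) = ge (i + 1) * (ge i * z) := by
  rw [conj_e2_t h1 h2, D4_t hlam h1 h2]

theorem D2i_t (hlam : lam * lami = 1) {i : ℕ} (h1 : 1 ≤ i) (h2 : i + 1 ≤ N - 1) (z) :
    gXi (i + 1) * (gXi i * (ge (i + 1) * z)) = ge i * (ge (i + 1) * z) := by
  rw [← conj_e2'_t h1 h2, D1i_t hlam h1 h2]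

theorem D3i_t (hlam : lam * lami = 1) {i : ℕ} (h1 : 1 ≤ i) (h2 : i + 1 ≤ N - 1) (z) :
    gXi i * (gXi (i + 1) * (ge i * z)) = ge (i + 1) * (ge i * z) := by
  rw [← conj_e1'_t h1 h2, D4i_t hlam h1 h2]

/-! ### the `e e X = e X` family -/

theorem I1_t (hlam : lam * lami = 1) {i : ℕ} (h1 : 1 ≤ i) (h2 : i + 1 ≤ N - 1) (z) :
    ge i * (ge (i + 1) * (gX i * z)) = ge i * (gXi (i + 1) * z) := by
  rw [← D1i_t hlam h1 h2, bXiX_t h1 (by omega)]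

theorem I1'_t (hlam : lam * lami = 1) {i : ℕ} (h1 : 1 ≤ i) (h2 : i + 1 ≤ N - 1) (z) :
    ge i * (ge (i + 1) * (gXi i * z)) = ge i * (gX (i + 1) * z) := by
  rw [← D1_t hlam h1 h2, bXXi_t h1 (by omega)]

theorem I2a_t (hlam : lam * lami = 1) {i : ℕ} (h1 : 1 ≤ i) (h2 : i + 1 ≤ N - 1) (z) :
    gX (i + 1) * (ge i * z) = gXi i * (ge (i + 1) * (ge i * z)) := by
  rw [← bXiX_t h1 (show i ≤ N - 1 by omega) (gX (i+1) * (ge i * z)), D3_t hlam h1 h2]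

theorem I2_t (hlam : lam * lami = 1) {i : ℕ} (h1 : 1 ≤ i) (h2 : i + 1 ≤ N - 1) (z) :
    gX (i + 1) * (ge i * (ge (i + 1) * z)) = gXi i * (ge (i + 1) * z) := by
  rw [I2a_t hlam h1 h2, T1a_t hlam h1 h2]

theorem I4a_t (hlam : lam * lami = 1) {i : ℕ} (h1 : 1 ≤ i) (h2 : i + 1 ≤ N - 1) (z) :
    gX i * (ge (i + 1) * z) = gXi (i + 1) * (ge i * (ge (i + 1) * z)) := by
  rw [← bXiX_t (show 1 ≤ i + 1 by omega) h2 (gX i * (ge (i+1) * z)), D2_t hlam h1 h2]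

theorem I4_t (hlam : lam * lami = 1) {i : ℕ} (h1 : 1 ≤ i) (h2 : i + 1 ≤ N - 1) (z) :
    gXi (i + 1) * (ge i * (ge (i + 1) * z)) = gX i * (ge (i + 1) * z) :=
  (I4a_t hlam h1 h2 z).symm

theorem I5_t (hlam : lam * lami = 1) {i : ℕ} (h1 : 1 ≤ i) (h2 : i + 1 ≤ N - 1) (z) :
    gXi i * (ge (i + 1) * (ge i * z)) = gX (i + 1) * (ge i * z) :=
  (I2a_t hlam h1 h2 z).symm

theorem I6_t (hlam : lam * lami = 1) {i : ℕ} (h1 : 1 ≤ i) (h2 : i + 1 ≤ N - 1) (z) :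
    gX i * (ge (i + 1) * (ge i * z)) = gXi (i + 1) * (ge i * z) := by
  rw [I4a_t hlam h1 h2, T1b_t hlam h1 h2]

/-! ### conjugation moves -/

theorem conj1 {i : ℕ} (h1 : 1 ≤ i) (h2 : i + 1 ≤ N - 1) :
    gX (i + 1) * (ge i * gXi (i + 1)) = gXi i * (ge (i + 1) * gX i) := by
  simp only [ee_expand, mul_sub, sub_mul, smul_sub, mul_smul_comm, smul_mul_assoc,
    mul_one, one_mul, mul_assoc]
  rw [bXXi_s14 (by omega) h2, bXiX_s14 h1 (by omega), bv1r h1 h2, bv3r h1 h2]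

theorem conj2 {i : ℕ} (h1 : 1 ≤ i) (h2 : i + 1 ≤ N - 1) :
    gXi (i + 1) * (ge i * gX (i + 1)) = gX i * (ge (i + 1) * gXi i) := by
  simp only [ee_expand, mul_sub, sub_mul, smul_sub, mul_smul_comm, smul_mul_assoc,
    mul_one, one_mul, mul_assoc]
  rw [bXiX_s14 (by omega) h2, bXXi_s14 h1 (by omega), bv2r h1 h2, bv4r h1 h2]

theorem conj1_t {i : ℕ} (h1 : 1 ≤ i) (h2 : i + 1 ≤ N - 1) (z) :
    gX (i + 1) * (ge i * (gXi (i + 1) * z)) = gXi i * (ge (i + 1) * (gX i * z)) := by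
  simpa only [mul_assoc] using tail_eq (conj1 h1 h2) z

theorem conj2_t {i : ℕ} (h1 : 1 ≤ i) (h2 : i + 1 ≤ N - 1) (z) :
    gXi (i + 1) * (ge i * (gX (i + 1) * z)) = gX i * (ge (i + 1) * (gXi i * z)) := by
  simpa only [mul_assoc] using tail_eq (conj2 h1 h2) z

end Derived3
section Derived4

variable {R : Type} [CommRing R] {lam lami deli q0 q1 A : R} {N : ℕ}

local notation "gX" => XX R lam lami deli q0 q1 A N
local notation "gXi" => XXi R lam lami deli q0 q1 A N
local notation "gY" => YY R lam lami deli q0 q1 A N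
local notation "gYi" => YYi R lam lami deli q0 q1 A N
local notation "ge" => ee R lam lami deli q0 q1 A N

theorem commute_e_right {g : BB R lam lami deli q0 q1 A N} {i : ℕ}
    (hX : Commute g (gX i)) (hXi : Commute g (gXi i)) : Commute g (ge i) := by
  rw [ee_expand i]
  exact (Commute.one_right g).sub_right (commute_smul_right deli (hX.sub_right hXi))

/-- distant commutation; `i + 2 ≤ j` -/
theorem cXX {i j : ℕ} (h1 : 1 ≤ i) (hij : i + 2 ≤ j) (h2 : j ≤ N - 1) :
    Commute (gX i) (gX j) := (bcomm_s14 h1 hij h2).symm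

theorem cXiX {i j : ℕ} (h1 : 1 ≤ i) (hij : i + 2 ≤ j) (h2 : j ≤ N - 1) :
    Commute (gXi i) (gX j) :=
  commute_inv_left (bXiX_s14 h1 (by omega)) (bXXi_s14 h1 (by omega)) (cXX h1 hij h2)

theorem cXXi {i j : ℕ} (h1 : 1 ≤ i) (hij : i + 2 ≤ j) (h2 : j ≤ N - 1) :
    Commute (gX i) (gXi j) :=
  (commute_inv_left (bXiX_s14 (by omega) h2) (bXXi_s14 (by omega) h2) (cXX h1 hij h2).symm).symm

theorem cXiXi {i j : ℕ} (h1 : 1 ≤ i) (hij : i + 2 ≤ j) (h2 : j ≤ N - 1) :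
    Commute (gXi i) (gXi j) :=
  (commute_inv_left (bXiX_s14 (by omega) h2) (bXXi_s14 (by omega) h2) (cXiX h1 hij h2).symm).symm

theorem cXe {i j : ℕ} (h1 : 1 ≤ i) (hij : i + 2 ≤ j) (h2 : j ≤ N - 1) :
    Commute (gX i) (ge j) := commute_e_right (cXX h1 hij h2) (cXXi h1 hij h2)

theorem cXie {i j : ℕ} (h1 : 1 ≤ i) (hij : i + 2 ≤ j) (h2 : j ≤ N - 1) :
    Commute (gXi i) (ge j) := commute_e_right (cXiX h1 hij h2) (cXiXi h1 hij h2)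

theorem ceX {i j : ℕ} (h1 : 1 ≤ i) (hij : i + 2 ≤ j) (h2 : j ≤ N - 1) :
    Commute (ge i) (gX j) :=
  (commute_e_right (cXX h1 hij h2).symm (cXiX h1 hij h2).symm).symm

theorem ceXi {i j : ℕ} (h1 : 1 ≤ i) (hij : i + 2 ≤ j) (h2 : j ≤ N - 1) :
    Commute (ge i) (gXi j) :=
  (commute_e_right (cXXi h1 hij h2).symm (cXiXi h1 hij h2).symm).symm

theorem cee {i j : ℕ} (h1 : 1 ≤ i) (hij : i + 2 ≤ j) (h2 : j ≤ N - 1) :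
    Commute (ge i) (ge j) := commute_e_right (ceX h1 hij h2) (ceXi h1 hij h2)

/-! ### `Y` commutes with everything of index `≥ 2` -/

theorem cYX {i : ℕ} (h1 : 2 ≤ i) (h2 : i ≤ N - 1) : Commute gY (gX i) := bYcomm_s14 h1 h2

theorem cYiX {i : ℕ} (h1 : 2 ≤ i) (h2 : i ≤ N - 1) : Commute gYi (gX i) :=
  commute_inv_left (bYiY_s14 (by omega)) (bYYi_s14 (by omega)) (cYX h1 h2)

theorem cYXi {i : ℕ} (h1 : 2 ≤ i) (h2 : i ≤ N - 1) : Commute gY (gXi i) :=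
  (commute_inv_left (bXiX_s14 (by omega) h2) (bXXi_s14 (by omega) h2) (cYX h1 h2).symm).symm

theorem cYiXi {i : ℕ} (h1 : 2 ≤ i) (h2 : i ≤ N - 1) : Commute gYi (gXi i) :=
  (commute_inv_left (bXiX_s14 (by omega) h2) (bXXi_s14 (by omega) h2) (cYiX h1 h2).symm).symm

theorem cYe {i : ℕ} (h1 : 2 ≤ i) (h2 : i ≤ N - 1) : Commute gY (ge i) :=
  commute_e_right (cYX h1 h2) (cYXi h1 h2)

theorem cYie {i : ℕ} (h1 : 2 ≤ i) (h2 : i ≤ N - 1) : Commute gYi (ge i) :=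
  commute_e_right (cYiX h1 h2) (cYiXi h1 h2)

/-! ### the type B relation, tailed -/

theorem K1_t (hN : 2 ≤ N) (z) : gY * (gX 1 * (gY * (ge 1 * z))) = ge 1 * z := by
  simpa only [mul_assoc] using tail_eq (bYXYe hN) z

theorem hYe_t (hN : 2 ≤ N) (z) : gX 1 * (gY * (ge 1 * z)) = gYi * (ge 1 * z) := by
  rw [← bYiY_t (show 0 < N by omega) (gX 1 * (gY * (ge 1 * z))), K1_t hN]

theorem K2_t (hN : 2 ≤ N) (z) : gYi * (gXi 1 * (gYi * (ge 1 * z))) = ge 1 * z := by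
  rw [← hYe_t hN, bXiX_t (le_refl 1) (by omega), bYiY_t (by omega)]

end Derived4
section Prodn

variable {M : Type*} [Monoid M]

def prodn (f : ℕ → M) : ℕ → M
  | 0 => 1
  | m + 1 => prodn f m * f m

@[simp] theorem prodn_zero (f : ℕ → M) : prodn f 0 = 1 := rfl

theorem prodn_succ (f : ℕ → M) (m : ℕ) : prodn f (m + 1) = prodn f m * f m := rfl

@[simp] theorem prodn_one (f : ℕ → M) : prodn f 1 = f 0 := by
  rw [prodn_succ, prodn_zero, one_mul]

theorem prodn_congr {f f' : ℕ → M} {m : ℕ} (h : ∀ t, t < m → f t = f' t) :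
    prodn f m = prodn f' m := by
  induction m with
  | zero => rfl
  | succ m ih => rw [prodn_succ, prodn_succ, ih (fun t ht => h t (by omega)), h m (by omega)]

theorem prodn_front (f : ℕ → M) (m : ℕ) :
    prodn f (m + 1) = f 0 * prodn (fun t => f (t + 1)) m := by
  induction m with
  | zero => simp [prodn_succ]
  | succ m ih =>
      rw [prodn_succ, ih, mul_assoc, prodn_succ]

theorem prodn_add (f : ℕ → M) (m1 m2 : ℕ) :
    prodn f (m1 + m2) = prodn f m1 * prodn (fun t => f (m1 + t)) m2 := by
  induction m2 with
  | zero => simp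
  | succ m2 ih => rw [← Nat.add_assoc, prodn_succ, ih, mul_assoc, prodn_succ]

theorem commute_prodn {g : M} {f : ℕ → M} {m : ℕ} (h : ∀ t, t < m → Commute g (f t)) :
    Commute g (prodn f m) := by
  induction m with
  | zero => exact Commute.one_right g
  | succ m ih => exact (ih (fun t ht => h t (by omega))).mul_right (h m (by omega))

theorem prodn_range (f : ℕ → M) (m : ℕ) : ((List.range m).map f).prod = prodn f m := by
  induction m with
  | zero => rfl
  | succ m ih =>
      rw [List.range_succ, List.map_append, List.prod_append, ih, List.map_singleton,
        List.prod_singleton, prodn_succ]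

end Prodn

section ChainDefs

variable (R : Type) [CommRing R] (lam lami deli q0 q1 A : R) (N : ℕ)

/-- ascending chain `e_a e_{a+1} ⋯ e_{a+m-1}` -/
noncomputable def ECh (a m : ℕ) : BB R lam lami deli q0 q1 A N :=
  prodn (fun t => ee R lam lami deli q0 q1 A N (a + t)) m

/-- step-two chain `e_a e_{a+2} ⋯ e_{a+2(m-1)}` -/
noncomputable def E2h (a m : ℕ) : BB R lam lami deli q0 q1 A N :=
  prodn (fun t => ee R lam lami deli q0 q1 A N (a + 2 * t)) m

/-- ascending `X_a X_{a+1} ⋯ X_{a+m-1}` -/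
noncomputable def XAh (a m : ℕ) : BB R lam lami deli q0 q1 A N :=
  prodn (fun t => XX R lam lami deli q0 q1 A N (a + t)) m

/-- ascending inverses `X⁻¹_a ⋯ X⁻¹_{a+m-1}` -/
noncomputable def XIAh (a m : ℕ) : BB R lam lami deli q0 q1 A N :=
  prodn (fun t => XXi R lam lami deli q0 q1 A N (a + t)) m

/-- descending `X_{a+m-1} ⋯ X_{a+1} X_a` -/
noncomputable def XDh : ℕ → ℕ → BB R lam lami deli q0 q1 A N
  | _, 0 => 1
  | a, (m + 1) => XX R lam lami deli q0 q1 A N (a + m) * XDh a m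

/-- descending inverses `X⁻¹_{a+m-1} ⋯ X⁻¹_a` -/
noncomputable def XIDh : ℕ → ℕ → BB R lam lami deli q0 q1 A N
  | _, 0 => 1
  | a, (m + 1) => XXi R lam lami deli q0 q1 A N (a + m) * XIDh a m

end ChainDefs

section ChainLemmas

variable {R : Type} [CommRing R] {lam lami deli q0 q1 A : R} {N : ℕ}

local notation "gX" => XX R lam lami deli q0 q1 A N
local notation "gXi" => XXi R lam lami deli q0 q1 A N
local notation "gY" => YY R lam lami deli q0 q1 A N
local notation "gYi" => YYi R lam lami deli q0 q1 A N
local notation "ge" => ee R lam lami deli q0 q1 A N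
local notation "gec" => ECh R lam lami deli q0 q1 A N
local notation "ge2" => E2h R lam lami deli q0 q1 A N
local notation "gxa" => XAh R lam lami deli q0 q1 A N
local notation "gxia" => XIAh R lam lami deli q0 q1 A N
local notation "gxd" => XDh R lam lami deli q0 q1 A N
local notation "gxid" => XIDh R lam lami deli q0 q1 A N
local notation "gH" => H R lam lami deli q0 q1 A N

@[simp] theorem ec_zero (a : ℕ) : gec a 0 = 1 := rfl
theorem ec_succ (a m : ℕ) : gec a (m + 1) = gec a m * ge (a + m) := rfl
@[simp] theorem ec_one (a : ℕ) : gec a 1 = ge a := by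
  show prodn _ 1 = _; rw [prodn_one]; norm_num
theorem ec_front (a m : ℕ) : gec a (m + 1) = ge a * gec (a + 1) m := by
  show prodn _ _ = _ * prodn _ _
  rw [prodn_front]
  congr 1
  exact prodn_congr (fun t ht => by rw [show a + (t + 1) = a + 1 + t from by omega])
theorem ec_split (a m1 m2 : ℕ) : gec a (m1 + m2) = gec a m1 * gec (a + m1) m2 := by
  show prodn _ _ = prodn _ _ * prodn _ _
  rw [prodn_add]
  congr 1
  exact prodn_congr (fun t ht => by rw [show a + (m1 + t) = a + m1 + t from by omega])

@[simp] theorem e2_zero (a : ℕ) : ge2 a 0 = 1 := rfl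
theorem e2_succ (a m : ℕ) : ge2 a (m + 1) = ge2 a m * ge (a + 2 * m) := rfl
@[simp] theorem e2_one (a : ℕ) : ge2 a 1 = ge a := by
  show prodn _ 1 = _; rw [prodn_one]; norm_num

@[simp] theorem xa_zero (a : ℕ) : gxa a 0 = 1 := rfl
theorem xa_succ (a m : ℕ) : gxa a (m + 1) = gxa a m * gX (a + m) := rfl
@[simp] theorem xa_one (a : ℕ) : gxa a 1 = gX a := by
  show prodn _ 1 = _; rw [prodn_one]; norm_num
theorem xa_front (a m : ℕ) : gxa a (m + 1) = gX a * gxa (a + 1) m := by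
  show prodn _ _ = _ * prodn _ _
  rw [prodn_front]
  congr 1
  exact prodn_congr (fun t ht => by rw [show a + (t + 1) = a + 1 + t from by omega])

@[simp] theorem xia_zero (a : ℕ) : gxia a 0 = 1 := rfl
theorem xia_succ (a m : ℕ) : gxia a (m + 1) = gxia a m * gXi (a + m) := rfl
@[simp] theorem xia_one (a : ℕ) : gxia a 1 = gXi a := by
  show prodn _ 1 = _; rw [prodn_one]; norm_num

@[simp] theorem xd_zero (a : ℕ) : gxd a 0 = 1 := rfl
theorem xd_succ (a m : ℕ) : gxd a (m + 1) = gX (a + m) * gxd a m := rfl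
@[simp] theorem xd_one (a : ℕ) : gxd a 1 = gX a := by
  rw [xd_succ, xd_zero, mul_one, Nat.add_zero]
theorem xd_back (a m : ℕ) : gxd a (m + 1) = gxd (a + 1) m * gX a := by
  induction m generalizing a with
  | zero => simp
  | succ m ih =>
      rw [xd_succ, ih, ← mul_assoc, show a + (m+1) = a + 1 + m by omega, ← xd_succ]

@[simp] theorem xid_zero (a : ℕ) : gxid a 0 = 1 := rfl
theorem xid_succ (a m : ℕ) : gxid a (m + 1) = gXi (a + m) * gxid a m := rfl
@[simp] theorem xid_one (a : ℕ) : gxid a 1 = gXi a := by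
  rw [xid_succ, xid_zero, mul_one, Nat.add_zero]
theorem xid_back (a m : ℕ) : gxid a (m + 1) = gxid (a + 1) m * gXi a := by
  induction m generalizing a with
  | zero => simp
  | succ m ih =>
      rw [xid_succ, ih, ← mul_assoc, show a + (m+1) = a + 1 + m by omega, ← xid_succ]

/-! ### commutation with chains -/

theorem commute_ec {g : BB R lam lami deli q0 q1 A N} {a m : ℕ}
    (h : ∀ j, a ≤ j → j + 1 ≤ a + m → Commute g (ge j)) : Commute g (gec a m) :=
  commute_prodn (fun t ht => h (a + t) (by omega) (by omega))

theorem commute_e2 {g : BB R lam lami deli q0 q1 A N} {a m : ℕ}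
    (h : ∀ j, a ≤ j → j ≤ a + 2 * m - 2 → Commute g (ge j)) : Commute g (ge2 a m) :=
  commute_prodn (fun t ht => h (a + 2 * t) (by omega) (by omega))

theorem commute_xa {g : BB R lam lami deli q0 q1 A N} {a m : ℕ}
    (h : ∀ j, a ≤ j → j + 1 ≤ a + m → Commute g (gX j)) : Commute g (gxa a m) :=
  commute_prodn (fun t ht => h (a + t) (by omega) (by omega))

theorem commute_xia {g : BB R lam lami deli q0 q1 A N} {a m : ℕ}
    (h : ∀ j, a ≤ j → j + 1 ≤ a + m → Commute g (gXi j)) : Commute g (gxia a m) :=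
  commute_prodn (fun t ht => h (a + t) (by omega) (by omega))

theorem commute_xd {g : BB R lam lami deli q0 q1 A N} {a m : ℕ}
    (h : ∀ j, a ≤ j → j + 1 ≤ a + m → Commute g (gX j)) : Commute g (gxd a m) := by
  induction m with
  | zero => exact Commute.one_right g
  | succ m ih =>
      rw [xd_succ]
      exact (h (a + m) (by omega) (by omega)).mul_right (ih (fun j h1 h2 => h j h1 (by omega)))

/-! ### conversions -/

theorem Xprod_eq (i j : ℕ) : Xprod R lam lami deli q0 q1 A N i j = gxa i (j + 1 - i) := by
  rw [Xprod, prodn_range]; rfl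

theorem Eprod_eq (i j : ℕ) : Eprod R lam lami deli q0 q1 A N i j = ge2 i ((j - i) / 2 + 1) := by
  rw [Eprod, prodn_range]; rfl

/-! ### `e_a X(a+1,a+m) X(a,a+m-1) = e_a e_{a+1} ⋯ e_{a+m}` -/

theorem LemA (hlam : lam * lami = 1) :
    ∀ m a, 1 ≤ a → a + m ≤ N - 1 →
      ge a * (gxa (a + 1) m * gxa a m) = gec a (m + 1) := by
  intro m
  induction m with
  | zero => intro a h1 h2; simp [ec_one]
  | succ m ih =>
      intro a h1 h2
      rw [xa_front (a + 1) m, xa_front a m, show a + 1 + 1 = a + 2 by omega]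
      have hcomm : Commute (gX a) (gxa (a + 2) m) :=
        commute_xa (fun j hj1 hj2 => (cXX h1 (by omega) (by omega)).symm.symm)
      calc ge a * (gX (a + 1) * gxa (a + 2) m * (gX a * gxa (a + 1) m))
          = ge a * (gX (a + 1) * (gxa (a + 2) m * (gX a * gxa (a + 1) m))) := by
            rw [mul_assoc]
        _ = ge a * (gX (a + 1) * (gX a * (gxa (a + 2) m * gxa (a + 1) m))) := by
            rw [wcomm hcomm.symm]
        _ = ge a * (ge (a + 1) * (gxa (a + 2) m * gxa (a + 1) m)) := by
            rw [D1_t hlam h1 (by omega)]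
        _ = ge a * gec (a + 1) (m + 1) := by
            rw [← ih (a + 1) (by omega) (by omega)]
        _ = gec a (m + 2) := by rw [← ec_front]

/-! ### recursion for `H` -/

theorem Hrec (hlam : lam * lami = 1) (k : ℕ) (hk : 1 ≤ k) (hN : 2 * k + 1 ≤ N - 1) :
    gH (k + 1) = gec (k + 1) (k + 1) * gH k := by
  obtain ⟨j, rfl⟩ : ∃ j, k = j + 1 := ⟨k - 1, by omega⟩
  have hdef : gH (j + 1 + 1) = ge (j + 2) * Xprod R lam lami deli q0 q1 A N (j + 3) (2 * j + 3) *
      Xprod R lam lami deli q0 q1 A N (j + 2) (2 * j + 2) * gH (j + 1) := rfl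
  rw [hdef, Xprod_eq, Xprod_eq, show 2 * j + 3 + 1 - (j + 3) = j + 1 by omega,
    show 2 * j + 2 + 1 - (j + 2) = j + 1 by omega, mul_assoc (ge (j+2)),
    LemA hlam (j + 1) (j + 2) (by omega) (by omega)]

end ChainLemmas
section PartI

variable {R : Type} [CommRing R] {lam lami deli q0 q1 A : R} {N : ℕ}

local notation "gX" => XX R lam lami deli q0 q1 A N
local notation "gXi" => XXi R lam lami deli q0 q1 A N
local notation "ge" => ee R lam lami deli q0 q1 A N
local notation "gec" => ECh R lam lami deli q0 q1 A N
local notation "ge2" => E2h R lam lami deli q0 q1 A N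
local notation "gH" => H R lam lami deli q0 q1 A N

theorem SH {k : ℕ} : ∀ t, t ≤ k → k + t + 1 ≤ N - 1 →
    gec (k + 2) t * prodn (fun j => ge2 (k - j) (j + 1)) t =
      prodn (fun j => ge2 (k - j) (j + 2)) t := by
  intro t
  induction t with
  | zero => simp
  | succ t ih =>
      intro htk hN
      have hc1 : Commute (ge (k + 2 + t)) (prodn (fun j => ge2 (k - j) (j + 1)) t) := by
        apply commute_prodn
        intro j hj
        apply commute_e2
        intro idx h1 h2
        exact (cee (by omega) (by omega) (by omega)).symm
      have hc2 : Commute (ge (k + 2 + t)) (ge2 (k - t) (t + 1)) := by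
        apply commute_e2
        intro idx h1 h2
        exact (cee (by omega) (by omega) (by omega)).symm
      rw [ec_succ, prodn_succ, mul_assoc, ← mul_assoc (ge (k + 2 + t)), hc1.eq, mul_assoc,
        hc2.eq, ← mul_assoc, ← mul_assoc, ih (by omega) (by omega), mul_assoc,
        show ge2 (k - t) (t + 1) * ge (k + 2 + t) = ge2 (k - t) (t + 2) from by
          rw [e2_succ (k - t) (t + 1), show k - t + 2 * (t + 1) = k + 2 + t from by omega],
        ← prodn_succ]

theorem Hi (hlam : lam * lami = 1) :
    ∀ k, 1 ≤ k → 2 * k ≤ N → gH k = prodn (fun j => ge2 (k - j) (j + 1)) k := by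
  intro k
  induction k with
  | zero => omega
  | succ k ih =>
      intro _ hN
      rcases Nat.eq_or_lt_of_le (show 1 ≤ k + 1 from by omega) with h1 | h1
      · -- k = 0
        obtain rfl : k = 0 := by omega
        show gH 1 = _
        rw [show gH 1 = ge 1 from rfl, prodn_one]
        simp
      · have hk : 1 ≤ k := by omega
        rw [Hrec hlam k hk (by omega), ih hk (by omega), ec_front,
          mul_assoc, SH k (le_refl k) (by omega), prodn_front]
        congr 1
        · simp
        · exact prodn_congr (fun t ht => by rw [show k + 1 - (t + 1) = k - t from by omega])

end PartI
section PartII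

variable {R : Type} [CommRing R] {lam lami deli q0 q1 A : R} {N : ℕ}

local notation "gX" => XX R lam lami deli q0 q1 A N
local notation "gXi" => XXi R lam lami deli q0 q1 A N
local notation "ge" => ee R lam lami deli q0 q1 A N
local notation "gec" => ECh R lam lami deli q0 q1 A N
local notation "ge2" => E2h R lam lami deli q0 q1 A N
local notation "gH" => H R lam lami deli q0 q1 A N

theorem Gsplit {k j : ℕ} (hj1 : k + 1 ≤ j) (hj2 : j + 1 ≤ 2 * k) :
    gec (k + 1) (k + 1) =
      gec (k + 1) (j - (k + 1)) * (ge j * (ge (j + 1) * gec (j + 2) (2 * k - j))) := by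
  nth_rewrite 2 [show (k + 1 : ℕ) = (j - (k + 1)) + (2 + (2 * k - j)) from by omega]
  rw [ec_split, show k + 1 + (j - (k + 1)) = j from by omega, ec_split,
    show gec j 2 = ge j * ge (j + 1) from by rw [ec_succ, ec_one]]
  simp only [mul_assoc]

theorem GX (hlam : lam * lami = 1) {k j : ℕ} (hj1 : k + 1 ≤ j) (hj2 : j + 1 ≤ 2 * k)
    (hN : 2 * k + 1 ≤ N - 1) :
    gec (k + 1) (k + 1) * gX j = gX (j + 2) * gec (k + 1) (k + 1) := by
  have hb1 : 1 ≤ j := by omega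
  have hb2 : j + 1 ≤ N - 1 := by omega
  have hc1 : Commute (gX j) (gec (j + 2) (2 * k - j)) :=
    commute_ec (fun i h1 h2 => cXe hb1 (by omega) (by omega))
  have hc2 : Commute (gX (j + 2)) (gec (k + 1) (j - (k + 1))) :=
    commute_ec (fun i h1 h2 => (ceX (by omega) (by omega) (by omega)).symm)
  have hc3 : Commute (gX (j + 2)) (ge j) := (ceX hb1 (by omega) (by omega)).symm
  rw [Gsplit hj1 hj2]
  simp only [mul_assoc]
  rw [← hc1.eq, I1_t hlam hb1 hb2, wcomm hc2, wcomm hc3,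
    show 2 * k - j = 2 * k - j - 1 + 1 from by omega, ec_front,
    show j + 2 = j + 1 + 1 from rfl,
    I2_t hlam (show 1 ≤ j + 1 from by omega) (show j + 1 + 1 ≤ N - 1 from by omega)]

theorem GXi (hlam : lam * lami = 1) {k j : ℕ} (hj1 : k + 1 ≤ j) (hj2 : j + 1 ≤ 2 * k)
    (hN : 2 * k + 1 ≤ N - 1) :
    gec (k + 1) (k + 1) * gXi j = gXi (j + 2) * gec (k + 1) (k + 1) := by
  have hb1 : 1 ≤ j := by omega
  have hb2 : j + 1 ≤ N - 1 := by omega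
  have hc1 : Commute (gXi j) (gec (j + 2) (2 * k - j)) :=
    commute_ec (fun i h1 h2 => cXie hb1 (by omega) (by omega))
  have hc2 : Commute (gXi (j + 2)) (gec (k + 1) (j - (k + 1))) :=
    commute_ec (fun i h1 h2 => (ceXi (by omega) (by omega) (by omega)).symm)
  have hc3 : Commute (gXi (j + 2)) (ge j) := (ceXi hb1 (by omega) (by omega)).symm
  rw [Gsplit hj1 hj2]
  simp only [mul_assoc]
  rw [← hc1.eq, I1'_t hlam hb1 hb2, wcomm hc2, wcomm hc3,
    show 2 * k - j = 2 * k - j - 1 + 1 from by omega, ec_front,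
    show j + 2 = j + 1 + 1 from rfl,
    I4_t hlam (show 1 ≤ j + 1 from by omega) (show j + 1 + 1 ≤ N - 1 from by omega)]

theorem Ge (hlam : lam * lami = 1) {k j : ℕ} (hj1 : k + 1 ≤ j) (hj2 : j + 1 ≤ 2 * k)
    (hN : 2 * k + 1 ≤ N - 1) :
    gec (k + 1) (k + 1) * ge j = ge (j + 2) * gec (k + 1) (k + 1) := by
  have hb1 : 1 ≤ j := by omega
  have hb2 : j + 1 ≤ N - 1 := by omega
  have hc1 : Commute (ge j) (gec (j + 2) (2 * k - j)) :=
    commute_ec (fun i h1 h2 => cee hb1 (by omega) (by omega))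
  have hc2 : Commute (ge (j + 2)) (gec (k + 1) (j - (k + 1))) :=
    commute_ec (fun i h1 h2 => (cee (by omega) (by omega) (by omega)).symm)
  have hc3 : Commute (ge (j + 2)) (ge j) := (cee hb1 (by omega) (by omega)).symm
  rw [Gsplit hj1 hj2]
  simp only [mul_assoc]
  rw [← hc1.eq, T1b_t hlam hb1 hb2, wcomm hc2, wcomm hc3,
    show 2 * k - j = 2 * k - j - 1 + 1 from by omega, ec_front,
    show j + 2 = j + 1 + 1 from rfl,
    T1a_t hlam (show 1 ≤ j + 1 from by omega) (show j + 1 + 1 ≤ N - 1 from by omega)]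

/-! ### boundary case `i = k` -/

theorem HeR (hlam : lam * lami = 1) {k : ℕ} (hk : 1 ≤ k) (hN : 2 * k ≤ N) :
    gH k = ge k * prodn (fun j => ge2 (k - 1 - j) (j + 2)) (k - 1) := by
  obtain ⟨m, rfl⟩ : ∃ m, k = m + 1 := ⟨k - 1, by omega⟩
  rw [Hi hlam (m + 1) (by omega) hN, prodn_front, Nat.add_sub_cancel]
  congr 1
  · show ge2 (m + 1 - 0) 1 = ge (m + 1)
    rw [Nat.sub_zero, e2_one]
  · exact prodn_congr (fun t ht => by rw [show m + 1 - (t + 1) = m - t from by omega])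

theorem HA2 (hlam : lam * lami = 1) {k : ℕ} (hk : 1 ≤ k) (hN : 2 * (k + 1) ≤ N) :
    gH (k + 1) = ge (k + 1) * (ge (k + 2) * (ge k *
      (gec (k + 3) (k - 1) * prodn (fun j => ge2 (k - 1 - j) (j + 2)) (k - 1)))) := by
  have hcomm : Commute (ge k) (gec (k + 3) (k - 1)) :=
    commute_ec (fun i h1 h2 => cee (by omega) (by omega) (by omega))
  rw [Hrec hlam k hk (by omega), HeR hlam hk (by omega)]
  nth_rewrite 2 [show (k + 1 : ℕ) = 1 + (1 + (k - 1)) from by omega]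
  rw [ec_split, ec_split, ec_one, ec_one, show k + 1 + 1 = k + 2 from rfl,
    show k + 2 + 1 = k + 3 from rfl]
  simp only [mul_assoc]
  rw [wcomm hcomm]

theorem HA1 (hlam : lam * lami = 1) {k : ℕ} (hk : 1 ≤ k) (hN : 2 * (k + 1) ≤ N) :
    gH (k + 1) = ge (k + 1) * (ge k * (ge (k + 2) *
      (gec (k + 3) (k - 1) * prodn (fun j => ge2 (k - 1 - j) (j + 2)) (k - 1)))) := by
  have hcomm : Commute (ge (k + 2)) (ge k) := (cee (by omega) (by omega) (by omega)).symm
  rw [HA2 hlam hk hN, wcomm hcomm]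

theorem bndX (hlam : lam * lami = 1) {k : ℕ} (hk : 1 ≤ k) (hN : 2 * (k + 1) ≤ N) :
    gX k * gH (k + 1) = gX (k + 2) * gH (k + 1) := by
  have hcomm : Commute (ge (k + 2)) (ge k) := (cee (by omega) (by omega) (by omega)).symm
  have i6 : ∀ z, gX k * (ge (k + 1) * (ge k * z)) = gXi (k + 1) * (ge k * z) :=
    fun z => I6_t hlam hk (by omega) z
  have i2 : ∀ z, gX (k + 2) * (ge (k + 1) * (ge (k + 2) * z)) = gXi (k + 1) * (ge (k + 2) * z) :=
    fun z => I2_t hlam (by omega) (by omega) z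
  calc gX k * gH (k + 1)
      = gXi (k + 1) * (ge k * (ge (k + 2) *
          (gec (k + 3) (k - 1) * prodn (fun j => ge2 (k - 1 - j) (j + 2)) (k - 1)))) := by
        rw [HA1 hlam hk hN, i6]
    _ = gX (k + 2) * gH (k + 1) := by
        rw [HA2 hlam hk hN, i2, wcomm hcomm]

theorem bndXi (hlam : lam * lami = 1) {k : ℕ} (hk : 1 ≤ k) (hN : 2 * (k + 1) ≤ N) :
    gXi k * gH (k + 1) = gXi (k + 2) * gH (k + 1) := by
  have hcomm : Commute (ge (k + 2)) (ge k) := (cee (by omega) (by omega) (by omega)).symm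
  have i5 : ∀ z, gXi k * (ge (k + 1) * (ge k * z)) = gX (k + 1) * (ge k * z) :=
    fun z => I5_t hlam hk (by omega) z
  have i4 : ∀ z, gXi (k + 2) * (ge (k + 1) * (ge (k + 2) * z)) = gX (k + 1) * (ge (k + 2) * z) :=
    fun z => I4_t hlam (by omega) (by omega) z
  calc gXi k * gH (k + 1)
      = gX (k + 1) * (ge k * (ge (k + 2) *
          (gec (k + 3) (k - 1) * prodn (fun j => ge2 (k - 1 - j) (j + 2)) (k - 1)))) := by
        rw [HA1 hlam hk hN, i5]
    _ = gXi (k + 2) * gH (k + 1) := by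
        rw [HA2 hlam hk hN, i4, wcomm hcomm]

theorem bndE (hlam : lam * lami = 1) {k : ℕ} (hk : 1 ≤ k) (hN : 2 * (k + 1) ≤ N) :
    ge k * gH (k + 1) = ge (k + 2) * gH (k + 1) := by
  have hcomm : Commute (ge (k + 2)) (ge k) := (cee (by omega) (by omega) (by omega)).symm
  have t1b : ∀ z, ge k * (ge (k + 1) * (ge k * z)) = ge k * z :=
    fun z => T1b_t hlam hk (by omega) z
  have t1a : ∀ z, ge (k + 2) * (ge (k + 1) * (ge (k + 2) * z)) = ge (k + 2) * z :=
    fun z => T1a_t hlam (by omega) (by omega) z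
  calc ge k * gH (k + 1)
      = ge k * (ge (k + 2) *
          (gec (k + 3) (k - 1) * prodn (fun j => ge2 (k - 1 - j) (j + 2)) (k - 1))) := by
        rw [HA1 hlam hk hN, t1b]
    _ = ge (k + 2) * gH (k + 1) := by
        rw [HA2 hlam hk hN, t1a, wcomm hcomm]

/-! ### part (ii) -/

theorem PartII (hlam : lam * lami = 1) :
    ∀ k, 2 * k ≤ N → ∀ i, 1 ≤ i → i + 1 ≤ k →
      gX i * gH k = gX (2 * k - i) * gH k ∧
      gXi i * gH k = gXi (2 * k - i) * gH k ∧
      ge i * gH k = ge (2 * k - i) * gH k := by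
  intro k
  induction k with
  | zero => intro _ i h1 h2; omega
  | succ k ih =>
      intro hN i h1 h2
      have hk : 1 ≤ k := by omega
      have hG : gH (k + 1) = gec (k + 1) (k + 1) * gH k := Hrec hlam k hk (by omega)
      rcases Nat.lt_or_ge i k with hik | hik
      · obtain ⟨e1, e2, e3⟩ := ih (by omega) i h1 (by omega)
        have hcX : Commute (gX i) (gec (k + 1) (k + 1)) :=
          commute_ec (fun idx hx1 hx2 => cXe h1 (by omega) (by omega))
        have hcXi : Commute (gXi i) (gec (k + 1) (k + 1)) :=
          commute_ec (fun idx hx1 hx2 => cXie h1 (by omega) (by omega))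
        have hce : Commute (ge i) (gec (k + 1) (k + 1)) :=
          commute_ec (fun idx hx1 hx2 => cee h1 (by omega) (by omega))
        refine ⟨?_, ?_, ?_⟩
        · calc gX i * gH (k + 1)
              = gec (k + 1) (k + 1) * (gX i * gH k) := by
                rw [hG, ← mul_assoc, hcX.eq, mul_assoc]
            _ = gec (k + 1) (k + 1) * (gX (2 * k - i) * gH k) := by rw [e1]
            _ = gX (2 * k - i + 2) * (gec (k + 1) (k + 1) * gH k) := by
                rw [← mul_assoc, GX hlam (by omega) (by omega) (by omega), mul_assoc]
            _ = gX (2 * (k + 1) - i) * gH (k + 1) := by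
                rw [← hG, show 2 * k - i + 2 = 2 * (k + 1) - i from by omega]
        · calc gXi i * gH (k + 1)
              = gec (k + 1) (k + 1) * (gXi i * gH k) := by
                rw [hG, ← mul_assoc, hcXi.eq, mul_assoc]
            _ = gec (k + 1) (k + 1) * (gXi (2 * k - i) * gH k) := by rw [e2]
            _ = gXi (2 * k - i + 2) * (gec (k + 1) (k + 1) * gH k) := by
                rw [← mul_assoc, GXi hlam (by omega) (by omega) (by omega), mul_assoc]
            _ = gXi (2 * (k + 1) - i) * gH (k + 1) := by
                rw [← hG, show 2 * k - i + 2 = 2 * (k + 1) - i from by omega]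
        · calc ge i * gH (k + 1)
              = gec (k + 1) (k + 1) * (ge i * gH k) := by
                rw [hG, ← mul_assoc, hce.eq, mul_assoc]
            _ = gec (k + 1) (k + 1) * (ge (2 * k - i) * gH k) := by rw [e3]
            _ = ge (2 * k - i + 2) * (gec (k + 1) (k + 1) * gH k) := by
                rw [← mul_assoc, Ge hlam (by omega) (by omega) (by omega), mul_assoc]
            _ = ge (2 * (k + 1) - i) * gH (k + 1) := by
                rw [← hG, show 2 * k - i + 2 = 2 * (k + 1) - i from by omega]
      · obtain rfl : i = k := by omega
        refine ⟨?_, ?_, ?_⟩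
        · rw [show 2 * (i + 1) - i = i + 2 from by omega]; exact bndX hlam hk hN
        · rw [show 2 * (i + 1) - i = i + 2 from by omega]; exact bndXi hlam hk hN
        · rw [show 2 * (i + 1) - i = i + 2 from by omega]; exact bndE hlam hk hN

end PartII
section YpBasics

variable {R : Type} [CommRing R] {lam lami deli q0 q1 A : R} {N : ℕ}

local notation "gX" => XX R lam lami deli q0 q1 A N
local notation "gXi" => XXi R lam lami deli q0 q1 A N
local notation "gY" => YY R lam lami deli q0 q1 A N
local notation "gYi" => YYi R lam lami deli q0 q1 A N
local notation "ge" => ee R lam lami deli q0 q1 A N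
local notation "gYp" => Yp R lam lami deli q0 q1 A N
local notation "gYpi" => Ypi R lam lami deli q0 q1 A N
local notation "gxa" => XAh R lam lami deli q0 q1 A N
local notation "gxia" => XIAh R lam lami deli q0 q1 A N

theorem Yp_one : gYp 1 = gY := rfl
theorem Ypi_one : gYpi 1 = gYi := rfl

theorem Yp_succ {j : ℕ} (hj : 1 ≤ j) : gYp (j + 1) = gX j * gYp j * gX j := by
  obtain ⟨t, rfl⟩ : ∃ t, j = t + 1 := ⟨j - 1, by omega⟩
  rfl

theorem Ypi_succ {j : ℕ} (hj : 1 ≤ j) : gYpi (j + 1) = gXi j * gYpi j * gXi j := by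
  obtain ⟨t, rfl⟩ : ∃ t, j = t + 1 := ⟨j - 1, by omega⟩
  rfl

theorem Yp_inv : ∀ j, j ≤ N → gYp j * gYpi j = 1 ∧ gYpi j * gYp j = 1 := by
  intro j
  induction j with
  | zero => intro _; constructor <;> simp [Yp, Ypi]
  | succ j ih =>
      intro hN
      match j, ih with
      | 0, _ =>
          constructor
          · exact bYYi_s14 (by omega)
          · exact bYiY_s14 (by omega)
      | (t + 1), ih =>
          have hb1 : 1 ≤ t + 1 := by omega
          have hb2 : t + 1 ≤ N - 1 := by omega
          obtain ⟨h1, h2⟩ := ih (by omega)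
          constructor
          · rw [Yp_succ hb1, Ypi_succ hb1]
            simp only [mul_assoc]
            rw [bXXi_t hb1 hb2, wmul2 h1, one_mul, bXXi_s14 hb1 hb2]
          · rw [Yp_succ hb1, Ypi_succ hb1]
            simp only [mul_assoc]
            rw [bXiX_t hb1 hb2, wmul2 h2, one_mul, bXiX_s14 hb1 hb2]

theorem Yp_slide {j : ℕ} (h1 : 1 ≤ j) (h2 : j ≤ N - 1) :
    gYp j * gX j = gXi j * gYp (j + 1) := by
  rw [Yp_succ h1, ← mul_assoc, ← mul_assoc, bXiX_s14 h1 h2, one_mul]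

theorem Ypi_slide {j : ℕ} (h1 : 1 ≤ j) (h2 : j ≤ N - 1) :
    gYpi j * gXi j = gX j * gYpi (j + 1) := by
  rw [Ypi_succ h1, ← mul_assoc, ← mul_assoc, bXXi_s14 h1 h2, one_mul]

theorem Yp_slide_t {j : ℕ} (h1 : 1 ≤ j) (h2 : j ≤ N - 1) (z) :
    gYp j * (gX j * z) = gXi j * (gYp (j + 1) * z) := by
  simpa only [mul_assoc] using tail_eq (Yp_slide h1 h2) z

theorem Ypi_slide_t {j : ℕ} (h1 : 1 ≤ j) (h2 : j ≤ N - 1) (z) :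
    gYpi j * (gXi j * z) = gX j * (gYpi (j + 1) * z) := by
  simpa only [mul_assoc] using tail_eq (Ypi_slide h1 h2) z

theorem YpXA_t {a : ℕ} (ha : 1 ≤ a) : ∀ m, a + m ≤ N → ∀ z,
    gYp a * (gxa a m * z) = gxia a m * (gYp (a + m) * z) := by
  intro m
  induction m with
  | zero => intro _ z; simp
  | succ m ih =>
      intro hm z
      have hsp : ∀ w, gxa a (m + 1) * w = gxa a m * (gX (a + m) * w) := fun w => by
        rw [xa_succ]; simp only [mul_assoc]
      have hsp' : ∀ w, gxia a (m + 1) * w = gxia a m * (gXi (a + m) * w) := fun w => by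
        rw [xia_succ]; simp only [mul_assoc]
      rw [hsp, ih (by omega), Yp_slide_t (by omega) (by omega), ← hsp',
        show a + m + 1 = a + (m + 1) from by omega]

theorem YpiXIA_t {a : ℕ} (ha : 1 ≤ a) : ∀ m, a + m ≤ N → ∀ z,
    gYpi a * (gxia a m * z) = gxa a m * (gYpi (a + m) * z) := by
  intro m
  induction m with
  | zero => intro _ z; simp
  | succ m ih =>
      intro hm z
      have hsp : ∀ w, gxa a (m + 1) * w = gxa a m * (gX (a + m) * w) := fun w => by
        rw [xa_succ]; simp only [mul_assoc]
      have hsp' : ∀ w, gxia a (m + 1) * w = gxia a m * (gXi (a + m) * w) := fun w => by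
        rw [xia_succ]; simp only [mul_assoc]
      rw [hsp', ih (by omega), Ypi_slide_t (by omega) (by omega), ← hsp,
        show a + m + 1 = a + (m + 1) from by omega]

theorem cYp_e : ∀ j m, j + 1 ≤ m → 2 ≤ m → m ≤ N - 1 → Commute (gYp j) (ge m) := by
  intro j
  induction j with
  | zero => intro m _ _ _; exact Commute.one_left _
  | succ j ih =>
      intro m hjm hm2 hmN
      match j, ih with
      | 0, _ => exact cYe hm2 hmN
      | (t + 1), ih =>
          rw [Yp_succ (show 1 ≤ t + 1 by omega)]
          exact ((cXe (by omega) (by omega) hmN).mul_left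
            (ih m (by omega) hm2 hmN)).mul_left (cXe (by omega) (by omega) hmN)

theorem cYpi_e : ∀ j m, j + 1 ≤ m → 2 ≤ m → m ≤ N - 1 → Commute (gYpi j) (ge m) := by
  intro j
  induction j with
  | zero => intro m _ _ _; exact Commute.one_left _
  | succ j ih =>
      intro m hjm hm2 hmN
      match j, ih with
      | 0, _ => exact cYie hm2 hmN
      | (t + 1), ih =>
          rw [Ypi_succ (show 1 ≤ t + 1 by omega)]
          exact ((cXie (by omega) (by omega) hmN).mul_left
            (ih m (by omega) hm2 hmN)).mul_left (cXie (by omega) (by omega) hmN)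

end YpBasics
section Cascade

variable {R : Type} [CommRing R] {lam lami deli q0 q1 A : R} {N : ℕ}

local notation "gX" => XX R lam lami deli q0 q1 A N
local notation "gXi" => XXi R lam lami deli q0 q1 A N
local notation "gY" => YY R lam lami deli q0 q1 A N
local notation "gYi" => YYi R lam lami deli q0 q1 A N
local notation "ge" => ee R lam lami deli q0 q1 A N
local notation "gYp" => Yp R lam lami deli q0 q1 A N
local notation "gYpi" => Ypi R lam lami deli q0 q1 A N
local notation "gec" => ECh R lam lami deli q0 q1 A N
local notation "gxa" => XAh R lam lami deli q0 q1 A N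
local notation "gxia" => XIAh R lam lami deli q0 q1 A N
local notation "gxd" => XDh R lam lami deli q0 q1 A N
local notation "gxid" => XIDh R lam lami deli q0 q1 A N
local notation "gH" => H R lam lami deli q0 q1 A N

theorem CASC (hlam : lam * lami = 1) : ∀ u a, 1 ≤ a → a + u + 1 ≤ N - 1 → ∀ z,
    gYp (a + u + 2) * (gec a (u + 2) * z) =
      gxd (a + 1) (u + 1) * (gYp (a + 1) * (gXi a * (gec (a + 1) (u + 1) * (gxa a u * z)))) := by
  intro u
  induction u with
  | zero =>
      intro a ha hN z
      show gYp (a + 2) * (gec a 2 * z) =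
        gxd (a + 1) 1 * (gYp (a + 1) * (gXi a * (gec (a + 1) 1 * (gxa a 0 * z))))
      have hsp : ∀ w, gec a 2 * w = ge a * (ge (a + 1) * w) := fun w => by
        rw [show gec a 2 = ge a * ge (a + 1) from by
          have h2 : gec a 2 = gec a 1 * ge (a + 1) := ec_succ a 1
          rwa [ec_one] at h2]
        simp only [mul_assoc]
      rw [show gYp (a + 2) = gX (a + 1) * gYp (a + 1) * gX (a + 1) from Yp_succ (by omega),
        xd_one, ec_one, xa_zero, one_mul]
      simp only [mul_assoc]
      rw [hsp, I2_t hlam (show 1 ≤ a from ha) (show a + 1 ≤ N - 1 from by omega)]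
  | succ u ih =>
      intro a ha hN z
      show gYp (a + u + 3) * (gec a (u + 3) * z) =
        gxd (a + 1) (u + 2) * (gYp (a + 1) * (gXi a * (gec (a + 1) (u + 2) * (gxa a (u + 1) * z))))
      have hYp : gYp (a + u + 3) = gX (a + u + 2) * gYp (a + u + 2) * gX (a + u + 2) :=
        Yp_succ (by omega)
      have hsplit : ∀ w, gec a (u + 3) * w =
          gec a (u + 1) * (ge (a + u + 1) * (ge (a + u + 2) * w)) := fun w => by
        rw [show gec a (u + 3) = gec a (u + 1) * ge (a + u + 1) * ge (a + u + 2) from rfl]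
        simp only [mul_assoc]
      have hc1 : Commute (gX (a + u + 2)) (gec a (u + 1)) :=
        commute_ec (fun idx h1 h2 => (ceX (by omega) (by omega) (by omega)).symm)
      have i2 : ∀ w, gX (a + u + 2) * (ge (a + u + 1) * (ge (a + u + 2) * w)) =
          gXi (a + u + 1) * (ge (a + u + 2) * w) := fun w => I2_t hlam (by omega) (by omega) w
      have hsp2 : ∀ w, gec a (u + 1) * w = gec a u * (ge (a + u) * w) := fun w => by
        rw [show gec a (u + 1) = gec a u * ge (a + u) from rfl]; simp only [mul_assoc]
      have i1 : ∀ w, ge (a + u) * (ge (a + u + 1) * (gX (a + u) * w)) =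
          ge (a + u) * (gXi (a + u + 1) * w) := fun w => I1_t hlam (by omega) (by omega) w
      have hmerge : ∀ w, gec a u * (ge (a + u) * (ge (a + u + 1) * w)) = gec a (u + 2) * w :=
        fun w => by
          rw [show gec a (u + 2) = gec a u * ge (a + u) * ge (a + u + 1) from rfl]
          simp only [mul_assoc]
      have hxa : ∀ w, gxa a u * (gX (a + u) * w) = gxa a (u + 1) * w := fun w => by
        rw [show gxa a (u + 1) = gxa a u * gX (a + u) from rfl]; simp only [mul_assoc]
      have hc2 : Commute (ge (a + u + 2)) (gxa a (u + 1)) :=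
        commute_xa (fun j hj1 hj2 => (cXe (by omega) (by omega) (by omega)).symm)
      have hec : ∀ w, gec (a + 1) (u + 1) * (ge (a + u + 2) * w) = gec (a + 1) (u + 2) * w :=
        fun w => by
          have h : gec (a + 1) (u + 2) = gec (a + 1) (u + 1) * ge (a + 1 + (u + 1)) :=
            ec_succ (a + 1) (u + 1)
          rw [show a + 1 + (u + 1) = a + u + 2 from by omega] at h
          rw [h]; simp only [mul_assoc]
      have hxd : ∀ w, gX (a + u + 2) * (gxd (a + 1) (u + 1) * w) = gxd (a + 1) (u + 2) * w :=
        fun w => by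
          have h : gxd (a + 1) (u + 2) = gX (a + 1 + (u + 1)) * gxd (a + 1) (u + 1) :=
            xd_succ (a + 1) (u + 1)
          rw [show a + 1 + (u + 1) = a + u + 2 from by omega] at h
          rw [h]; simp only [mul_assoc]
      rw [hYp]
      simp only [mul_assoc]
      rw [hsplit, wcomm hc1, i2, hsp2, ← i1, hmerge, ih a ha (by omega), hxa,
        wcomm hc2.symm, hec, hxd]

theorem CASCi (hlam : lam * lami = 1) : ∀ u a, 1 ≤ a → a + u + 1 ≤ N - 1 → ∀ z,
    gYpi (a + u + 2) * (gec a (u + 2) * z) =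
      gxid (a + 1) (u + 1) * (gYpi (a + 1) * (gX a * (gec (a + 1) (u + 1) * (gxia a u * z)))) := by
  intro u
  induction u with
  | zero =>
      intro a ha hN z
      show gYpi (a + 2) * (gec a 2 * z) =
        gxid (a + 1) 1 * (gYpi (a + 1) * (gX a * (gec (a + 1) 1 * (gxia a 0 * z))))
      have hsp : ∀ w, gec a 2 * w = ge a * (ge (a + 1) * w) := fun w => by
        rw [show gec a 2 = ge a * ge (a + 1) from by
          have h2 : gec a 2 = gec a 1 * ge (a + 1) := ec_succ a 1
          rwa [ec_one] at h2]
        simp only [mul_assoc]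
      rw [show gYpi (a + 2) = gXi (a + 1) * gYpi (a + 1) * gXi (a + 1) from Ypi_succ (by omega),
        xid_one, ec_one, xia_zero, one_mul]
      simp only [mul_assoc]
      rw [hsp, I4_t hlam (show 1 ≤ a from ha) (show a + 1 ≤ N - 1 from by omega)]
  | succ u ih =>
      intro a ha hN z
      show gYpi (a + u + 3) * (gec a (u + 3) * z) =
        gxid (a + 1) (u + 2) * (gYpi (a + 1) * (gX a * (gec (a + 1) (u + 2) * (gxia a (u + 1) * z))))
      have hYp : gYpi (a + u + 3) = gXi (a + u + 2) * gYpi (a + u + 2) * gXi (a + u + 2) :=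
        Ypi_succ (by omega)
      have hsplit : ∀ w, gec a (u + 3) * w =
          gec a (u + 1) * (ge (a + u + 1) * (ge (a + u + 2) * w)) := fun w => by
        rw [show gec a (u + 3) = gec a (u + 1) * ge (a + u + 1) * ge (a + u + 2) from rfl]
        simp only [mul_assoc]
      have hc1 : Commute (gXi (a + u + 2)) (gec a (u + 1)) :=
        commute_ec (fun idx h1 h2 => (ceXi (by omega) (by omega) (by omega)).symm)
      have i4 : ∀ w, gXi (a + u + 2) * (ge (a + u + 1) * (ge (a + u + 2) * w)) =
          gX (a + u + 1) * (ge (a + u + 2) * w) := fun w => I4_t hlam (by omega) (by omega) w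
      have hsp2 : ∀ w, gec a (u + 1) * w = gec a u * (ge (a + u) * w) := fun w => by
        rw [show gec a (u + 1) = gec a u * ge (a + u) from rfl]; simp only [mul_assoc]
      have i1 : ∀ w, ge (a + u) * (ge (a + u + 1) * (gXi (a + u) * w)) =
          ge (a + u) * (gX (a + u + 1) * w) := fun w => I1'_t hlam (by omega) (by omega) w
      have hmerge : ∀ w, gec a u * (ge (a + u) * (ge (a + u + 1) * w)) = gec a (u + 2) * w :=
        fun w => by
          rw [show gec a (u + 2) = gec a u * ge (a + u) * ge (a + u + 1) from rfl]
          simp only [mul_assoc]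
      have hxa : ∀ w, gxia a u * (gXi (a + u) * w) = gxia a (u + 1) * w := fun w => by
        rw [show gxia a (u + 1) = gxia a u * gXi (a + u) from rfl]; simp only [mul_assoc]
      have hc2 : Commute (ge (a + u + 2)) (gxia a (u + 1)) :=
        commute_xia (fun j hj1 hj2 => (cXie (by omega) (by omega) (by omega)).symm)
      have hec : ∀ w, gec (a + 1) (u + 1) * (ge (a + u + 2) * w) = gec (a + 1) (u + 2) * w :=
        fun w => by
          have h : gec (a + 1) (u + 2) = gec (a + 1) (u + 1) * ge (a + 1 + (u + 1)) :=
            ec_succ (a + 1) (u + 1)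
          rw [show a + 1 + (u + 1) = a + u + 2 from by omega] at h
          rw [h]; simp only [mul_assoc]
      have hxd : ∀ w, gXi (a + u + 2) * (gxid (a + 1) (u + 1) * w) = gxid (a + 1) (u + 2) * w :=
        fun w => by
          have h : gxid (a + 1) (u + 2) = gXi (a + 1 + (u + 1)) * gxid (a + 1) (u + 1) :=
            xid_succ (a + 1) (u + 1)
          rw [show a + 1 + (u + 1) = a + u + 2 from by omega] at h
          rw [h]; simp only [mul_assoc]
      rw [hYp]
      simp only [mul_assoc]
      rw [hsplit, wcomm hc1, i4, hsp2, ← i1, hmerge, ih a ha (by omega), hxa,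
        wcomm hc2.symm, hec, hxd]

end Cascade
section Fold

variable {R : Type} [CommRing R] {lam lami deli q0 q1 A : R} {N : ℕ}

local notation "gX" => XX R lam lami deli q0 q1 A N
local notation "gXi" => XXi R lam lami deli q0 q1 A N
local notation "gY" => YY R lam lami deli q0 q1 A N
local notation "gYi" => YYi R lam lami deli q0 q1 A N
local notation "ge" => ee R lam lami deli q0 q1 A N
local notation "gYp" => Yp R lam lami deli q0 q1 A N
local notation "gYpi" => Ypi R lam lami deli q0 q1 A N
local notation "gec" => ECh R lam lami deli q0 q1 A N
local notation "gxa" => XAh R lam lami deli q0 q1 A N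
local notation "gxia" => XIAh R lam lami deli q0 q1 A N
local notation "gxd" => XDh R lam lami deli q0 q1 A N
local notation "gxid" => XIDh R lam lami deli q0 q1 A N
local notation "gH" => H R lam lami deli q0 q1 A N

theorem Phi (hlam : lam * lami = 1) : ∀ m a, 1 ≤ a → a + m + 1 ≤ N - 1 → ∀ z,
    gxd a (m + 2) * (gec (a + 1) (m + 1) * (gxia a m * z)) = gec a (m + 2) * z := by
  intro m
  induction m with
  | zero =>
      intro a ha hN z
      show gxd a 2 * (gec (a + 1) 1 * (gxia a 0 * z)) = gec a 2 * z
      have h2 : gec a 2 = ge a * ge (a + 1) := by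
        have h0 : gec a 2 = gec a 1 * ge (a + 1) := ec_succ a 1
        rwa [ec_one] at h0
      rw [ec_one, xia_zero, one_mul, show gxd a 2 = gX (a + 1) * (gX a * 1) from rfl, h2]
      simp only [mul_one, mul_assoc]
      rw [D2_t hlam (show 1 ≤ a from ha) (show a + 1 ≤ N - 1 from by omega)]
  | succ m ihm =>
      intro a ha hN z
      show gxd a (m + 3) * (gec (a + 1) (m + 2) * (gxia a (m + 1) * z)) = gec a (m + 3) * z
      have hxd : ∀ w, gxd a (m + 3) * w = gX (a + m + 2) * (gxd a (m + 2) * w) := fun w => by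
        rw [show gxd a (m + 3) = gX (a + m + 2) * gxd a (m + 2) from xd_succ a (m + 2)]
        simp only [mul_assoc]
      have hec : ∀ w, gec (a + 1) (m + 2) * w = gec (a + 1) (m + 1) * (ge (a + m + 2) * w) :=
        fun w => by
          have h : gec (a + 1) (m + 2) = gec (a + 1) (m + 1) * ge (a + 1 + (m + 1)) :=
            ec_succ (a + 1) (m + 1)
          rw [show a + 1 + (m + 1) = a + m + 2 from by omega] at h
          rw [h]; simp only [mul_assoc]
      have hxia : ∀ w, gxia a (m + 1) * w = gxia a m * (gXi (a + m) * w) := fun w => by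
        rw [show gxia a (m + 1) = gxia a m * gXi (a + m) from rfl]; simp only [mul_assoc]
      have hce : Commute (ge (a + m + 2)) (gxia a m) :=
        commute_xia (fun j h1 h2 => (cXie (by omega) (by omega) (by omega)).symm)
      have hcXi : Commute (ge (a + m + 2)) (gXi (a + m)) :=
        (cXie (by omega) (by omega) (by omega)).symm
      have hsp : ∀ w, gec a (m + 2) * w = gec a (m + 1) * (ge (a + m + 1) * w) := fun w => by
        rw [show gec a (m + 2) = gec a (m + 1) * ge (a + m + 1) from rfl]
        simp only [mul_assoc]
      have hcc : Commute (gX (a + m + 2)) (gec a (m + 1)) :=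
        commute_ec (fun j h1 h2 => (ceX (by omega) (by omega) (by omega)).symm)
      have i2 : ∀ w, gX (a + m + 2) * (ge (a + m + 1) * (ge (a + m + 2) * w)) =
          gXi (a + m + 1) * (ge (a + m + 2) * w) := fun w => I2_t hlam (by omega) (by omega) w
      have hsp1 : ∀ w, gec a (m + 1) * w = gec a m * (ge (a + m) * w) := fun w => by
        rw [show gec a (m + 1) = gec a m * ge (a + m) from rfl]; simp only [mul_assoc]
      have d1i : ∀ w, ge (a + m) * (gXi (a + m + 1) * (gXi (a + m) * w)) =
          ge (a + m) * (ge (a + m + 1) * w) := fun w => D1i_t hlam (by omega) (by omega) w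
      have hfin : ∀ w, gec a (m + 3) * w =
          gec a m * (ge (a + m) * (ge (a + m + 1) * (ge (a + m + 2) * w))) := fun w => by
        rw [show gec a (m + 3) = gec a m * ge (a + m) * ge (a + m + 1) * ge (a + m + 2) from rfl]
        simp only [mul_assoc]
      rw [hxd, hec, hxia, wcomm hce, wcomm hcXi, ihm a ha (by omega), hsp, wcomm hcc,
        wcomm hcXi.symm, i2, wcomm hcXi, hsp1, d1i, hfin]

theorem Phii (hlam : lam * lami = 1) : ∀ m a, 1 ≤ a → a + m + 1 ≤ N - 1 → ∀ z,
    gxid a (m + 2) * (gec (a + 1) (m + 1) * (gxa a m * z)) = gec a (m + 2) * z := by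
  intro m
  induction m with
  | zero =>
      intro a ha hN z
      show gxid a 2 * (gec (a + 1) 1 * (gxa a 0 * z)) = gec a 2 * z
      have h2 : gec a 2 = ge a * ge (a + 1) := by
        have h0 : gec a 2 = gec a 1 * ge (a + 1) := ec_succ a 1
        rwa [ec_one] at h0
      rw [ec_one, xa_zero, one_mul, show gxid a 2 = gXi (a + 1) * (gXi a * 1) from rfl, h2]
      simp only [mul_one, mul_assoc]
      rw [D2i_t hlam (show 1 ≤ a from ha) (show a + 1 ≤ N - 1 from by omega)]
  | succ m ihm =>
      intro a ha hN z
      show gxid a (m + 3) * (gec (a + 1) (m + 2) * (gxa a (m + 1) * z)) = gec a (m + 3) * z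
      have hxd : ∀ w, gxid a (m + 3) * w = gXi (a + m + 2) * (gxid a (m + 2) * w) := fun w => by
        rw [show gxid a (m + 3) = gXi (a + m + 2) * gxid a (m + 2) from xid_succ a (m + 2)]
        simp only [mul_assoc]
      have hec : ∀ w, gec (a + 1) (m + 2) * w = gec (a + 1) (m + 1) * (ge (a + m + 2) * w) :=
        fun w => by
          have h : gec (a + 1) (m + 2) = gec (a + 1) (m + 1) * ge (a + 1 + (m + 1)) :=
            ec_succ (a + 1) (m + 1)
          rw [show a + 1 + (m + 1) = a + m + 2 from by omega] at h
          rw [h]; simp only [mul_assoc]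
      have hxia : ∀ w, gxa a (m + 1) * w = gxa a m * (gX (a + m) * w) := fun w => by
        rw [show gxa a (m + 1) = gxa a m * gX (a + m) from rfl]; simp only [mul_assoc]
      have hce : Commute (ge (a + m + 2)) (gxa a m) :=
        commute_xa (fun j h1 h2 => (cXe (by omega) (by omega) (by omega)).symm)
      have hcXi : Commute (ge (a + m + 2)) (gX (a + m)) :=
        (cXe (by omega) (by omega) (by omega)).symm
      have hsp : ∀ w, gec a (m + 2) * w = gec a (m + 1) * (ge (a + m + 1) * w) := fun w => by
        rw [show gec a (m + 2) = gec a (m + 1) * ge (a + m + 1) from rfl]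
        simp only [mul_assoc]
      have hcc : Commute (gXi (a + m + 2)) (gec a (m + 1)) :=
        commute_ec (fun j h1 h2 => (ceXi (by omega) (by omega) (by omega)).symm)
      have i4 : ∀ w, gXi (a + m + 2) * (ge (a + m + 1) * (ge (a + m + 2) * w)) =
          gX (a + m + 1) * (ge (a + m + 2) * w) := fun w => I4_t hlam (by omega) (by omega) w
      have hsp1 : ∀ w, gec a (m + 1) * w = gec a m * (ge (a + m) * w) := fun w => by
        rw [show gec a (m + 1) = gec a m * ge (a + m) from rfl]; simp only [mul_assoc]
      have d1 : ∀ w, ge (a + m) * (gX (a + m + 1) * (gX (a + m) * w)) =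
          ge (a + m) * (ge (a + m + 1) * w) := fun w => D1_t hlam (by omega) (by omega) w
      have hfin : ∀ w, gec a (m + 3) * w =
          gec a m * (ge (a + m) * (ge (a + m + 1) * (ge (a + m + 2) * w))) := fun w => by
        rw [show gec a (m + 3) = gec a m * ge (a + m) * ge (a + m + 1) * ge (a + m + 2) from rfl]
        simp only [mul_assoc]
      rw [hxd, hec, hxia, wcomm hce, wcomm hcXi, ihm a ha (by omega), hsp, wcomm hcc,
        wcomm hcXi.symm, i4, wcomm hcXi, hsp1, d1, hfin]

theorem PartIII (hlam : lam * lami = 1) : ∀ k, 1 ≤ k → 2 * k ≤ N →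
    gYp (2 * k) * (gY * gH k) = lam • gH k ∧
    gYpi (2 * k) * (gYi * gH k) = lami • gH k := by
  intro k
  induction k with
  | zero => omega
  | succ k ih =>
      intro _ hN
      match k, ih with
      | 0, _ =>
          have hN2 : 2 ≤ N := by omega
          constructor
          · show gYp 2 * (gY * ge 1) = lam • ge 1
            rw [show gYp 2 = gX 1 * gYp 1 * gX 1 from Yp_succ (by omega), Yp_one]
            simp only [mul_assoc]
            rw [show gY * (gX 1 * (gY * ge 1)) = ge 1 from by
                simpa only [mul_assoc] using bYXYe hN2,
              bXe (le_refl 1) (by omega)]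
          · show gYpi 2 * (gYi * ge 1) = lami • ge 1
            rw [show gYpi 2 = gXi 1 * gYpi 1 * gXi 1 from Ypi_succ (by omega), Ypi_one]
            simp only [mul_assoc]
            rw [show gYi * (gXi 1 * (gYi * ge 1)) = ge 1 from by
                simpa only [mul_one] using K2_t hN2 1,
              bXie hlam (le_refl 1) (by omega)]
      | (v + 1), ih =>
          obtain ⟨IH1, IH2⟩ := ih (by omega) (by omega)
          have hH : gH (v + 2) = gec (v + 2) (v + 2) * gH (v + 1) :=
            Hrec hlam (v + 1) (by omega) (by omega)
          constructor
          · show gYp (2 * (v + 2)) * (gY * gH (v + 2)) = lam • gH (v + 2)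
            have hcY : Commute gY (gec (v + 2) (v + 2)) :=
              commute_ec (fun idx h1 h2 => cYe (by omega) (by omega))
            have hYs : ∀ w, gYp (v + 2 + 1) * (gXi (v + 2) * w) =
                gX (v + 2) * (gYp (v + 2) * w) := fun w => by
              rw [show gYp (v + 2 + 1) = gX (v + 2) * gYp (v + 2) * gX (v + 2) from
                Yp_succ (by omega)]
              simp only [mul_assoc]
              rw [bXXi_t (by omega) (by omega)]
            have hxd : ∀ w, gxd (v + 2 + 1) (v + 1) * (gX (v + 2) * w) =
                gxd (v + 2) (v + 2) * w := fun w => by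
              rw [show gxd (v + 2) (v + 2) = gxd (v + 2 + 1) (v + 1) * gX (v + 2) from
                xd_back (v + 2) (v + 1), mul_assoc]
            have hcYp : Commute (gYp (v + 2)) (gec (v + 2 + 1) (v + 1)) :=
              commute_ec (fun idx h1 h2 => cYp_e (v + 2) idx (by omega) (by omega) (by omega))
            have hslide : ∀ w, gYp (v + 2) * (gxa (v + 2) v * w) =
                gxia (v + 2) v * (gYp (v + 2 + v) * w) := fun w => YpXA_t (by omega) v (by omega) w
            rw [hH, wcomm hcY, show 2 * (v + 2) = v + 2 + v + 2 from by omega,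
              CASC hlam v (v + 2) (by omega) (by omega), hYs, hxd, wcomm hcYp, hslide,
              show v + 2 + v = 2 * (v + 1) from by omega, IH1]
            simp only [mul_smul_comm]
            rw [Phi hlam v (v + 2) (by omega) (by omega)]
          · show gYpi (2 * (v + 2)) * (gYi * gH (v + 2)) = lami • gH (v + 2)
            have hcY : Commute gYi (gec (v + 2) (v + 2)) :=
              commute_ec (fun idx h1 h2 => cYie (by omega) (by omega))
            have hYs : ∀ w, gYpi (v + 2 + 1) * (gX (v + 2) * w) =
                gXi (v + 2) * (gYpi (v + 2) * w) := fun w => by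
              rw [show gYpi (v + 2 + 1) = gXi (v + 2) * gYpi (v + 2) * gXi (v + 2) from
                Ypi_succ (by omega)]
              simp only [mul_assoc]
              rw [bXiX_t (by omega) (by omega)]
            have hxd : ∀ w, gxid (v + 2 + 1) (v + 1) * (gXi (v + 2) * w) =
                gxid (v + 2) (v + 2) * w := fun w => by
              rw [show gxid (v + 2) (v + 2) = gxid (v + 2 + 1) (v + 1) * gXi (v + 2) from
                xid_back (v + 2) (v + 1), mul_assoc]
            have hcYp : Commute (gYpi (v + 2)) (gec (v + 2 + 1) (v + 1)) :=
              commute_ec (fun idx h1 h2 => cYpi_e (v + 2) idx (by omega) (by omega) (by omega))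
            have hslide : ∀ w, gYpi (v + 2) * (gxia (v + 2) v * w) =
                gxa (v + 2) v * (gYpi (v + 2 + v) * w) := fun w => YpiXIA_t (by omega) v (by omega) w
            rw [hH, wcomm hcY, show 2 * (v + 2) = v + 2 + v + 2 from by omega,
              CASCi hlam v (v + 2) (by omega) (by omega), hYs, hxd, wcomm hcYp, hslide,
              show v + 2 + v = 2 * (v + 1) from by omega, IH2]
            simp only [mul_smul_comm]
            rw [Phii hlam v (v + 2) (by omega) (by omega)]

end Fold
/-- Properties of the closure element `H_n ∈ BB_{2n}(R)` (Lemma 26, (\ref{hdurche}) and the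
symmetry relations). -/
theorem BB_H_properties (R : Type) [CommRing R] [IsDomain R]
    (q qi lam lami del deli q0 q0i q1 A x : R)
    (hq : q * qi = 1) (hlam : lam * lami = 1) (hdel : del * deli = 1) (hq0u : q0 * q0i = 1)
    (hdelta : del = q - qi) (hx : x * del = del - lam + lami)
    (hA : A * (1 - q0 * lam) = q1 * x) (hq0 : q0 = qi) (n : ℕ) (hn : 1 ≤ n) :
    H R lam lami deli q0 q1 A (2 * n) n =
      ((List.range n).map (fun k => Eprod R lam lami deli q0 q1 A (2 * n) (n - k) (n + k))).prod ∧
    (∀ i, 1 ≤ i → i ≤ n - 1 →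
      XX R lam lami deli q0 q1 A (2 * n) i * H R lam lami deli q0 q1 A (2 * n) n = XX R lam lami deli q0 q1 A (2 * n) (2 * n - i) * H R lam lami deli q0 q1 A (2 * n) n ∧
      XXi R lam lami deli q0 q1 A (2 * n) i * H R lam lami deli q0 q1 A (2 * n) n = XXi R lam lami deli q0 q1 A (2 * n) (2 * n - i) * H R lam lami deli q0 q1 A (2 * n) n ∧
      ee R lam lami deli q0 q1 A (2 * n) i * H R lam lami deli q0 q1 A (2 * n) n = ee R lam lami deli q0 q1 A (2 * n) (2 * n - i) * H R lam lami deli q0 q1 A (2 * n) n) ∧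
    YY R lam lami deli q0 q1 A (2 * n) * H R lam lami deli q0 q1 A (2 * n) n = lam • (Ypi R lam lami deli q0 q1 A (2 * n) (2 * n) * H R lam lami deli q0 q1 A (2 * n) n) ∧
    YYi R lam lami deli q0 q1 A (2 * n) * H R lam lami deli q0 q1 A (2 * n) n = lami • (Yp R lam lami deli q0 q1 A (2 * n) (2 * n) * H R lam lami deli q0 q1 A (2 * n) n) := by
  have hN : 2 * n ≤ 2 * n := le_refl _
  obtain ⟨h3, h4⟩ := PartIII (N := 2 * n) hlam n hn hN
  obtain ⟨hinv1, hinv2⟩ := Yp_inv (N := 2 * n) (lam := lam) (lami := lami) (deli := deli)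
    (q0 := q0) (q1 := q1) (A := A) (2 * n) (le_refl _)
  refine ⟨?_, ?_, ?_, ?_⟩
  · rw [Hi hlam n hn hN, prodn_range]
    exact prodn_congr (fun t ht => by rw [Eprod_eq]; congr 1; omega)
  · intro i h1 h2
    exact PartII hlam n hN i h1 (by omega)
  · calc YY R lam lami deli q0 q1 A (2 * n) * H R lam lami deli q0 q1 A (2 * n) n
        = (Ypi R lam lami deli q0 q1 A (2 * n) (2 * n) * Yp R lam lami deli q0 q1 A (2 * n) (2 * n)) *
            (YY R lam lami deli q0 q1 A (2 * n) * H R lam lami deli q0 q1 A (2 * n) n) := by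
          rw [hinv2, one_mul]
      _ = Ypi R lam lami deli q0 q1 A (2 * n) (2 * n) *
            (Yp R lam lami deli q0 q1 A (2 * n) (2 * n) *
              (YY R lam lami deli q0 q1 A (2 * n) * H R lam lami deli q0 q1 A (2 * n) n)) := by
          simp only [mul_assoc]
      _ = Ypi R lam lami deli q0 q1 A (2 * n) (2 * n) * (lam • H R lam lami deli q0 q1 A (2 * n) n) := by
          rw [h3]
      _ = lam • (Ypi R lam lami deli q0 q1 A (2 * n) (2 * n) * H R lam lami deli q0 q1 A (2 * n) n) := by
          rw [mul_smul_comm]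
  · calc YYi R lam lami deli q0 q1 A (2 * n) * H R lam lami deli q0 q1 A (2 * n) n
        = (Yp R lam lami deli q0 q1 A (2 * n) (2 * n) * Ypi R lam lami deli q0 q1 A (2 * n) (2 * n)) *
            (YYi R lam lami deli q0 q1 A (2 * n) * H R lam lami deli q0 q1 A (2 * n) n) := by
          rw [hinv1, one_mul]
      _ = Yp R lam lami deli q0 q1 A (2 * n) (2 * n) *
            (Ypi R lam lami deli q0 q1 A (2 * n) (2 * n) *
              (YYi R lam lami deli q0 q1 A (2 * n) * H R lam lami deli q0 q1 A (2 * n) n)) := by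
          simp only [mul_assoc]
      _ = Yp R lam lami deli q0 q1 A (2 * n) (2 * n) * (lami • H R lam lami deli q0 q1 A (2 * n) n) := by
          rw [h4]
      _ = lami • (Yp R lam lami deli q0 q1 A (2 * n) (2 * n) * H R lam lami deli q0 q1 A (2 * n) n) := by
          rw [mul_smul_comm]

end BMWB
end
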